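/- arXiv:1910.14459 — 11 statements merged into one kernel-verified Lean document; each statement's English description precedes it below -/
import Mathlib

section
/- Let K ⊂ R^d be a convex body and let C be a cap of K (the intersection of K with a halfspace). For any real ρ ≥ 1, the ρ-expansion C^ρ (the cap cut by the hyperplane parallel to C's base at distance ρ·width(C) from the supporting hyperplane at the apex) satisfies vol(C^ρ) ≤ ρ^d · vol(C). -/
open MeasureTheory Metric Pointwise
open scoped RealInnerProductSpace

/-- For a cap `C` of a convex body `K` (cut by the hyperplane
`⟪u,y⟫ = b`, with supporting value `m = sup_{y ∈ K} ⟪u,y⟫` and width `m - b`),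
the `ρ`-expansion `C^ρ` (cut at distance `ρ·(m - b)` from the supporting
hyperplane) satisfies `vol(C^ρ) ≤ ρ^d · vol(C)` for `ρ ≥ 1`. -/
theorem stmt1 {d : ℕ} (K : Set (EuclideanSpace ℝ (Fin d)))
    (hKconv : Convex ℝ K) (hKcomp : IsCompact K) (hKint : (interior K).Nonempty)
    (u : EuclideanSpace ℝ (Fin d)) (hu : ‖u‖ = 1) (b : ℝ)
    (m : ℝ) (hm : m = sSup ((fun y => ⟪u, y⟫) '' K))
    (hC : ({y ∈ K | b ≤ ⟪u, y⟫}).Nonempty)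
    (ρ : ℝ) (hρ : 1 ≤ ρ) :
    volume {y ∈ K | m - ρ * (m - b) ≤ ⟪u, y⟫} ≤
      ENNReal.ofReal (ρ ^ d) * volume {y ∈ K | b ≤ ⟪u, y⟫} := by
  obtain ⟨p, hpK, _⟩ := hC
  have hKne : K.Nonempty := ⟨p, hpK⟩
  have hρ0 : (0:ℝ) < ρ := lt_of_lt_of_le one_pos hρ
  have hcont : Continuous fun y : EuclideanSpace ℝ (Fin d) => ⟪u, y⟫ :=
    continuous_const.inner continuous_id
  obtain ⟨x, hxK, hxmax⟩ := hKcomp.exists_isMaxOn hKne hcont.continuousOn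
  have hbdd : BddAbove ((fun y => ⟪u, y⟫) '' K) :=
    (hKcomp.image hcont).bddAbove
  have hxm : ⟪u, x⟫ = m := by
    rw [hm]
    refine le_antisymm (le_csSup hbdd ⟨x, hxK, rfl⟩) ?_
    exact csSup_le (hKne.image _) (by rintro a ⟨y, hy, rfl⟩; exact hxmax hy)
  set C : Set (EuclideanSpace ℝ (Fin d)) := {y ∈ K | b ≤ ⟪u, y⟫} with hCdef
  set f : EuclideanSpace ℝ (Fin d) → EuclideanSpace ℝ (Fin d) :=
    fun z => x + ρ • (z - x) with hfdef
  have hsub : {y ∈ K | m - ρ * (m - b) ≤ ⟪u, y⟫} ⊆ f '' C := by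
    rintro y ⟨hyK, hy⟩
    refine ⟨x + ρ⁻¹ • (y - x), ⟨?_, ?_⟩, ?_⟩
    · have : x + ρ⁻¹ • (y - x) = (1 - ρ⁻¹) • x + ρ⁻¹ • y := by
        rw [smul_sub]; module
      rw [this]
      exact hKconv hxK hyK (by simp [inv_le_one_of_one_le₀ hρ, hρ0.le])
        (by positivity) (by simp)
    · have h1 : ⟪u, x + ρ⁻¹ • (y - x)⟫ = m + ρ⁻¹ * (⟪u, y⟫ - m) := by
        rw [inner_add_right, inner_smul_right, inner_sub_right, hxm]
      rw [h1]
      have h2 : ρ⁻¹ * (⟪u, y⟫ - m) ≥ ρ⁻¹ * (-(ρ * (m - b))) := by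
        apply mul_le_mul_of_nonneg_left _ (by positivity)
        linarith
      have h3 : ρ⁻¹ * (-(ρ * (m - b))) = -(m - b) := by
        field_simp
      linarith [h2, h3.symm ▸ h2]
    · rw [hfdef]
      simp only [add_sub_cancel_left, smul_smul, mul_inv_cancel₀ hρ0.ne', one_smul]
      abel
  calc volume {y ∈ K | m - ρ * (m - b) ≤ ⟪u, y⟫} ≤ volume (f '' C) :=
        measure_mono hsub
    _ = ENNReal.ofReal (ρ ^ d) * volume C := by
        have himg : f '' C = (x - ρ • x) +ᵥ (ρ • C) := by
          ext z
          simp only [Set.mem_image, Set.mem_vadd_set, Set.mem_smul_set, hfdef]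
          constructor
          · rintro ⟨w, hw, rfl⟩
            exact ⟨ρ • w, ⟨w, hw, rfl⟩, by rw [vadd_eq_add, smul_sub]; abel⟩
          · rintro ⟨_, ⟨w, hw, rfl⟩, rfl⟩
            exact ⟨w, hw, by rw [vadd_eq_add, smul_sub]; abel⟩
        rw [himg, measure_vadd, Measure.addHaar_smul,
          finrank_euclideanSpace_fin, abs_of_pos (pow_pos hρ0 d)]
end

section
/- Let K be a convex body and let C₁ ⊆ C₂ be two caps of K defined by halfspaces H₁ and H₂ respectively. Let p be any point in C₁, and for λ ≥ 1 let H₁^λ and H₂^λ be the halfspaces obtained by scaling H₁ and H₂ by factor λ about p. Then K ∩ H₁^λ ⊆ K ∩ H₂^λ. -/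
open scoped RealInnerProductSpace

/-- If `C₁ = K ∩ H₁ ⊆ C₂ = K ∩ H₂` are caps of a convex body `K`,
`p ∈ C₁`, and `H₁^λ`, `H₂^λ` are the halfspaces scaled by a factor `λ ≥ 1` about
`p` (via the homothety `x ↦ p + λ(x - p)`), then `K ∩ H₁^λ ⊆ K ∩ H₂^λ`. -/
theorem stmt2 {d : ℕ} (K : Set (EuclideanSpace ℝ (Fin d)))
    (hKconv : Convex ℝ K) (hKcomp : IsCompact K) (hKint : (interior K).Nonempty)
    (u₁ u₂ : EuclideanSpace ℝ (Fin d)) (hu₁ : ‖u₁‖ = 1) (hu₂ : ‖u₂‖ = 1)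
    (b₁ b₂ : ℝ)
    (hsub : K ∩ {y | b₁ ≤ ⟪u₁, y⟫} ⊆ K ∩ {y | b₂ ≤ ⟪u₂, y⟫})
    (hC₁ : (K ∩ {y | b₁ ≤ ⟪u₁, y⟫}).Nonempty)
    (p : EuclideanSpace ℝ (Fin d)) (hp : p ∈ K ∩ {y | b₁ ≤ ⟪u₁, y⟫})
    (lam : ℝ) (hlam : 1 ≤ lam) :
    K ∩ (AffineMap.homothety p lam '' {y | b₁ ≤ ⟪u₁, y⟫}) ⊆
      K ∩ (AffineMap.homothety p lam '' {y | b₂ ≤ ⟪u₂, y⟫}) := by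
  rintro x ⟨hxK, y₀, hy₀, hmap⟩
  have lpos : (0:ℝ) < lam := lt_of_lt_of_le one_pos hlam
  have hxeq : x = lam • (y₀ - p) + p := by
    rw [← hmap, AffineMap.homothety_apply]; rfl
  have hy₀eq : y₀ = lam⁻¹ • x + (1 - lam⁻¹) • p := by
    rw [hxeq]
    rw [smul_add, smul_smul, inv_mul_cancel₀ (ne_of_gt lpos), one_smul]
    module
  have hy₀K : y₀ ∈ K := by
    rw [hy₀eq, add_comm]
    exact hKconv hp.1 hxK (by simp [le_of_lt lpos, inv_le_one_of_one_le₀ hlam])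
      (by positivity) (by ring)
  have hy₀C₂ := hsub ⟨hy₀K, hy₀⟩
  exact ⟨hxK, y₀, hy₀C₂.2, hmap⟩
end

section
/- Let K ⊂ R^d be a convex body in γ-canonical form for a constant γ, and let 0 < α < 1. Then there exist constants c, c' > 0 depending only on d and γ such that every cap C of K of width α satisfies c·α^d ≤ vol(C) ≤ c'·α. -/
/-!
The cap `{y ∈ K | m - α ≤ ⟪u, y⟫}` is squeezed between two simple bodies. If `x₀ ∈ K` attains
the support value `m`, convexity puts the homothetic copy `(1 - t) • x₀ + t • B(0, √γ)` of the
inner ball inside `K`, and for `t = α / (1/√γ + √γ)` it lies in the cap, giving a ball of radius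
`γ α / (1 + γ)`. Conversely the cap lies in the slab `m - α ≤ ⟪u, y⟫ ≤ m` cut off by the outer
ball, which fits in a box with one side `α` and `d - 1` sides `2/√γ`.
-/

open MeasureTheory Metric Set Module
open scoped RealInnerProductSpace Pointwise

section Cap

variable {E : Type*} [NormedAddCommGroup E] [InnerProductSpace ℝ E]

theorem Convex.closedBall_combo_subset {K : Set E} (hK : Convex ℝ K) {x c : E} {r t : ℝ}
    (hx : x ∈ K) (hr : 0 ≤ r) (hc : closedBall c r ⊆ K) (ht₀ : 0 ≤ t) (ht₁ : t ≤ 1) :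
    closedBall ((1 - t) • x + t • c) (t * r) ⊆ K :=
  calc closedBall ((1 - t) • x + t • c) (t * r) = (1 - t) • {x} + t • closedBall c r := by
        rw [smul_closedBall _ _ hr, smul_set_singleton, singleton_add_closedBall,
          Real.norm_of_nonneg ht₀]
    _ ⊆ (1 - t) • K + t • K :=
        add_subset_add (smul_set_mono (singleton_subset_iff.2 hx)) (smul_set_mono hc)
    _ ⊆ K := hK.set_combo_subset (sub_nonneg.2 ht₁) ht₀ (by ring)

theorem sub_le_inner_of_mem_closedBall {u p y : E} {ρ : ℝ} (hu : ‖u‖ = 1)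
    (hy : y ∈ closedBall p ρ) : ⟪u, p⟫ - ρ ≤ ⟪u, y⟫ := by
  have h : |⟪u, y - p⟫| ≤ ρ := calc
    |⟪u, y - p⟫| ≤ ‖u‖ * ‖y - p‖ := abs_real_inner_le_norm u (y - p)
    _ ≤ ρ := by rw [hu, one_mul]; exact mem_closedBall_iff_norm.1 hy
  rw [inner_sub_right] at h
  linarith [neg_abs_le (⟪u, y⟫ - ⟪u, p⟫)]

theorem Convex.closedBall_subset_cap {K : Set E} (hK : Convex ℝ K) {u x : E} {r R α : ℝ}
    (hu : ‖u‖ = 1) (hr : 0 ≤ r) (hball : closedBall 0 r ⊆ K) (hx : x ∈ K) (hxR : ⟪u, x⟫ ≤ R)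
    (hα : 0 ≤ α) (hαRr : α ≤ R + r) (hRr : 0 < R + r) :
    closedBall ((1 - α / (R + r)) • x) (α / (R + r) * r) ⊆ {y ∈ K | ⟪u, x⟫ - α ≤ ⟪u, y⟫} := by
  set t := α / (R + r)
  have ht₀ : 0 ≤ t := div_nonneg hα hRr.le
  have ht₁ : t ≤ 1 := (div_le_one hRr).2 hαRr
  have htα : t * (R + r) = α := div_mul_cancel₀ α hRr.ne'
  intro y hy
  refine ⟨hK.closedBall_combo_subset hx hr hball ht₀ ht₁ (by simpa using hy), ?_⟩
  have h := sub_le_inner_of_mem_closedBall hu hy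
  rw [real_inner_smul_right] at h
  nlinarith

end Cap

section Slab

variable {E : Type*} [NormedAddCommGroup E] [InnerProductSpace ℝ E] [FiniteDimensional ℝ E]
  [MeasurableSpace E] [BorelSpace E]

theorem OrthonormalBasis.volume_setOf_inner_mem {ι : Type*} [Fintype ι]
    (b : OrthonormalBasis ι ℝ E) {I : ι → Set ℝ} (hI : ∀ i, MeasurableSet (I i)) :
    volume {y : E | ∀ i, ⟪b i, y⟫ ∈ I i} = ∏ i, volume (I i) := by
  have hb : MeasurePreserving (fun y => WithLp.ofLp (b.repr y)) volume volume :=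
    (PiLp.volume_preserving_ofLp ι).comp b.measurePreserving_repr
  have hset : {y : E | ∀ i, ⟪b i, y⟫ ∈ I i} = (fun y => WithLp.ofLp (b.repr y)) ⁻¹' univ.pi I := by
    ext y
    simp [b.repr_apply_apply]
  rw [hset, hb.measure_preimage (MeasurableSet.univ_pi hI).nullMeasurableSet, volume_pi_pi]

theorem volume_closedBall_inter_slab_le {u : E} (hu : ‖u‖ = 1) (R a b : ℝ) :
    volume {y ∈ closedBall (0 : E) R | ⟪u, y⟫ ∈ Icc a b} ≤
      ENNReal.ofReal (b - a) * ENNReal.ofReal (2 * R) ^ (finrank ℝ E - 1) := by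
  have : Nontrivial E := ⟨⟨u, 0, by rintro rfl; simp at hu⟩⟩
  obtain ⟨n, hn⟩ : ∃ n, finrank ℝ E = n + 1 := Nat.exists_eq_succ_of_ne_zero finrank_pos.ne'
  have hu' : Orthonormal ℝ (({0} : Set (Fin (n + 1))).domRestrict fun _ => u) :=
    ⟨fun _ => hu, fun i j hij => absurd (Subsingleton.elim i j) hij⟩
  obtain ⟨e, he⟩ := hu'.exists_orthonormalBasis_extension_of_card_eq (by simpa using hn)
  let I : Fin (n + 1) → Set ℝ := Fin.cons (Icc a b) fun _ => Icc (-R) R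
  have hsub : {y ∈ closedBall (0 : E) R | ⟪u, y⟫ ∈ Icc a b} ⊆ {y | ∀ i, ⟪e i, y⟫ ∈ I i} := by
    rintro y ⟨hyR, hy⟩ i
    refine Fin.cases ?_ (fun j => ?_) i
    · simpa [I, he 0 rfl] using hy
    · have h : |⟪e j.succ, y⟫| ≤ R := calc
        |⟪e j.succ, y⟫| ≤ ‖e j.succ‖ * ‖y‖ := abs_real_inner_le_norm _ _
        _ ≤ R := by rw [e.orthonormal.1, one_mul]; exact mem_closedBall_zero_iff.1 hyR
      simpa [I] using abs_le.1 h
  have hI : ∀ i, MeasurableSet (I i) :=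
    fun i => Fin.cases measurableSet_Icc (fun _ => measurableSet_Icc) i
  calc _ ≤ volume {y | ∀ i, ⟪e i, y⟫ ∈ I i} := measure_mono hsub
    _ = _ := by
      rw [e.volume_setOf_inner_mem hI, Fin.prod_univ_succ, hn]
      simp [I, Real.volume_Icc, two_mul]

theorem volume_cap_le {K : Set E} {u : E} {R m α : ℝ} (hu : ‖u‖ = 1)
    (houter : K ⊆ closedBall 0 R) (hle : ∀ y ∈ K, ⟪u, y⟫ ≤ m) :
    volume {y ∈ K | m - α ≤ ⟪u, y⟫} ≤
      ENNReal.ofReal α * ENNReal.ofReal (2 * R) ^ (finrank ℝ E - 1) :=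
  calc volume {y ∈ K | m - α ≤ ⟪u, y⟫}
      ≤ volume {y ∈ closedBall (0 : E) R | ⟪u, y⟫ ∈ Icc (m - α) m} :=
        measure_mono fun y hy => ⟨houter hy.1, hy.2, hle y hy.1⟩
    _ ≤ _ := by simpa using volume_closedBall_inter_slab_le hu R (m - α) m

end Slab

/-- There exist constants `c, c' > 0` depending only on `d` and `γ`
such that for every convex body `K ⊆ ℝ^d` in `γ`-canonical form and every `α`
with `0 < α < 1`, every cap of `K` of width `α` has volume between `c·α^d` and
`c'·α`. -/
theorem stmt3 (d : ℕ) (γ : ℝ) (hγ0 : 0 < γ) (hγ1 : γ ≤ 1) :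
    ∃ c > (0 : ℝ), ∃ c' > (0 : ℝ),
      ∀ (K : Set (EuclideanSpace ℝ (Fin d))),
        Convex ℝ K → IsCompact K → (interior K).Nonempty →
        closedBall (0 : EuclideanSpace ℝ (Fin d)) (Real.sqrt γ) ⊆ K →
        K ⊆ closedBall (0 : EuclideanSpace ℝ (Fin d)) (1 / Real.sqrt γ) →
        ∀ (α : ℝ), 0 < α → α < 1 →
        ∀ (u : EuclideanSpace ℝ (Fin d)), ‖u‖ = 1 →
        ∀ (m : ℝ), m = sSup ((fun y => ⟪u, y⟫) '' K) →
          c * α ^ d ≤ (volume {y ∈ K | m - α ≤ ⟪u, y⟫}).toReal ∧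
            (volume {y ∈ K | m - α ≤ ⟪u, y⟫}).toReal ≤ c' * α := by
  set s := Real.sqrt γ
  have hs : 0 < s := Real.sqrt_pos.2 hγ0
  have hss : s * s = γ := Real.mul_self_sqrt hγ0.le
  set ω := (volume (closedBall (0 : EuclideanSpace ℝ (Fin d)) 1)).toReal
  have hω : 0 < ω := ENNReal.toReal_pos (measure_closedBall_pos _ _ one_pos).ne'
    measure_closedBall_lt_top.ne
  refine ⟨(γ / (1 + γ)) ^ d * ω, by positivity, (2 / s) ^ (d - 1), by positivity, ?_⟩
  intro K hK hKc _ hinner houter α hα0 hα1 u hu m hm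
  obtain ⟨x₀, hx₀K, hsup, hle⟩ := hKc.exists_sSup_image_eq_and_ge
    ⟨0, hinner (mem_closedBall_self hs.le)⟩ (f := fun y => ⟪u, y⟫) (by fun_prop)
  rw [hsup] at hm
  subst hm
  have hx₀R : ⟪u, x₀⟫ ≤ 1 / s := (real_inner_le_norm u x₀).trans <| by
    rw [hu, one_mul]; exact mem_closedBall_zero_iff.1 (houter hx₀K)
  constructor
  · have hcap := hK.closedBall_subset_cap hu hs.le hinner hx₀K hx₀R hα0.le
      (by linarith [one_le_one_div hs (Real.sqrt_le_one.2 hγ1)]) (by positivity)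
    have hradius : α / (1 / s + s) * s = γ / (1 + γ) * α := by
      rw [← hss]; field_simp
    rw [hradius] at hcap
    calc (γ / (1 + γ)) ^ d * ω * α ^ d
        = (volume (closedBall ((1 - α / (1 / s + s)) • x₀) (γ / (1 + γ) * α))).toReal := by
          rw [Measure.addHaar_closedBall' _ _ (by positivity), finrank_euclideanSpace_fin,
            ENNReal.toReal_mul, ENNReal.toReal_ofReal (by positivity)]
          ring
      _ ≤ _ := ENNReal.toReal_mono ((measure_mono fun y hy => houter hy.1).trans_lt
            measure_closedBall_lt_top).ne (measure_mono hcap)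
  · refine ENNReal.toReal_le_of_le_ofReal (by positivity)
      ((volume_cap_le hu houter hle).trans_eq ?_)
    rw [finrank_euclideanSpace_fin, ← ENNReal.ofReal_pow (by positivity),
      ← ENNReal.ofReal_mul hα0.le, mul_one_div, mul_comm]
end

section
/- Let K ⊂ R^d be a convex body and λ ≤ 1/5 a positive real. If x, y ∈ K are such that the Macbeath regions M^λ(x) and M^λ(y) have nonempty intersection, then M^λ(y) ⊆ M^{4λ}(x). -/
open scoped Pointwise

/-- The Macbeath region `M^λ(x) = x + λ((K − x) ∩ (x − K))`. -/
noncomputable def Mreg {d : ℕ} (K : Set (EuclideanSpace ℝ (Fin d))) (lam : ℝ)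
    (x : EuclideanSpace ℝ (Fin d)) : Set (EuclideanSpace ℝ (Fin d)) :=
  (fun v => x + lam • v) '' ((K - {x}) ∩ ({x} - K))

lemma mem_Mreg_iff {d : ℕ} {K : Set (EuclideanSpace ℝ (Fin d))} {lam : ℝ}
    {x p : EuclideanSpace ℝ (Fin d)} :
    p ∈ Mreg K lam x ↔ ∃ v, x + v ∈ K ∧ x - v ∈ K ∧ p = x + lam • v := by
  simp only [Mreg, Set.mem_image, Set.mem_inter_iff, Set.mem_sub, Set.mem_singleton_iff]
  constructor
  · rintro ⟨v, ⟨⟨k, hk, z, rfl, hkz⟩, ⟨z', rfl, m, hm, hmz⟩⟩, rfl⟩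
    exact ⟨v, by rw [← hkz]; simpa using hk, by rw [← hmz]; simpa using hm, rfl⟩
  · rintro ⟨v, h1, h2, rfl⟩
    exact ⟨v, ⟨⟨x + v, h1, x, rfl, by abel⟩, ⟨x, rfl, x - v, h2, by abel⟩⟩, rfl⟩

lemma convex4 {E : Type*} [AddCommGroup E] [Module ℝ E] {K : Set E} (h : Convex ℝ K)
    {p1 p2 p3 p4 : E} (h1 : p1 ∈ K) (h2 : p2 ∈ K) (h3 : p3 ∈ K) (h4 : p4 ∈ K)
    {a b c e : ℝ} (ha : 0 ≤ a) (hb : 0 ≤ b) (hc : 0 ≤ c) (he : 0 ≤ e)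
    (hsum : a + b + c + e = 1) : a • p1 + b • p2 + c • p3 + e • p4 ∈ K := by
  have := h.sum_mem (t := Finset.univ) (w := ![a, b, c, e]) (z := ![p1, p2, p3, p4])
    (fun i _ => by fin_cases i <;> simpa)
    (by simpa [Fin.sum_univ_four] using hsum)
    (fun i _ => by fin_cases i <;> simpa)
  simpa [Fin.sum_univ_four, add_assoc] using this

/-- If `0 < λ ≤ 1/5` and the Macbeath regions `M^λ(x)` and `M^λ(y)`
of a convex body `K` intersect, then `M^λ(y) ⊆ M^{4λ}(x)`. -/
theorem stmt4 {d : ℕ} (K : Set (EuclideanSpace ℝ (Fin d)))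
    (hKconv : Convex ℝ K) (hKcomp : IsCompact K) (hKint : (interior K).Nonempty)
    (lam : ℝ) (hlam0 : 0 < lam) (hlam : lam ≤ 1 / 5)
    (x y : EuclideanSpace ℝ (Fin d)) (hx : x ∈ K) (hy : y ∈ K)
    (hinter : (Mreg K lam x ∩ Mreg K lam y).Nonempty) :
    Mreg K lam y ⊆ Mreg K (4 * lam) x := by
  obtain ⟨z, hzx, hzy⟩ := hinter
  obtain ⟨u, hxu, hxu', hzxu⟩ := mem_Mreg_iff.mp hzx
  obtain ⟨w, hyw, hyw', hzyw⟩ := mem_Mreg_iff.mp hzy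
  have hzz : x + lam • u = y + lam • w := by rw [← hzxu, ← hzyw]
  have hyeq : y = x + lam • u - lam • w := by rw [hzz]; abel
  have h1p : (0:ℝ) < 1 + lam := by linarith
  have h1m : (0:ℝ) < 1 - lam := by linarith
  intro p hp
  obtain ⟨v, hyv, hyv', hpv⟩ := mem_Mreg_iff.mp hp
  rw [mem_Mreg_iff]
  refine ⟨(4:ℝ)⁻¹ • (u - w + v), ?_, ?_, ?_⟩
  · have hmem := convex4 hKconv hxu hyv hyw' hx
      (a := (1 - lam) / (4 * (1 + lam))) (b := 1/4)
      (c := (1 - lam) / (4 * (1 + lam))) (e := (1 + 5 * lam) / (4 * (1 + lam)))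
      (by positivity) (by norm_num) (by positivity) (by positivity)
      (by field_simp; ring)
    have heq : x + (4:ℝ)⁻¹ • (u - w + v) =
        ((1 - lam) / (4 * (1 + lam))) • (x + u) + (1/4 : ℝ) • (y + v) +
        ((1 - lam) / (4 * (1 + lam))) • (y - w) +
        ((1 + 5 * lam) / (4 * (1 + lam))) • x := by
      rw [hyeq]; match_scalars <;> (field_simp; try ring)
    rw [heq]; exact hmem
  · have hmem := convex4 hKconv hxu' hyv' hyw hx
      (a := (1 + lam) / (4 * (1 - lam))) (b := 1/4)
      (c := (1 + lam) / (4 * (1 - lam))) (e := (1 - 5 * lam) / (4 * (1 - lam)))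
      (by positivity) (by norm_num) (by positivity)
      (div_nonneg (by linarith) (by linarith))
      (by field_simp; ring)
    have heq : x - (4:ℝ)⁻¹ • (u - w + v) =
        ((1 + lam) / (4 * (1 - lam))) • (x - u) + (1/4 : ℝ) • (y - v) +
        ((1 + lam) / (4 * (1 - lam))) • (y + w) +
        ((1 - 5 * lam) / (4 * (1 - lam))) • x := by
      rw [hyeq]; match_scalars <;> (field_simp; try ring)
    rw [heq]; exact hmem
  · rw [hpv, hyeq]; match_scalars <;> (field_simp; try ring)
end

section
/- Let K ⊂ R^d be a convex body, C a cap of K, and x ∈ K. If the shrunken Macbeath region M'(x) = M^{1/5}(x) intersects C, then M'(x) ⊆ C², where C² is the 2-expansion of C. -/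
open MeasureTheory
open scoped Pointwise RealInnerProductSpace

lemma mreg_mem {d : ℕ} {K : Set (EuclideanSpace ℝ (Fin d))} {x p : EuclideanSpace ℝ (Fin d)}
    (hp : p ∈ Mreg K (1 / 5) x) :
    ∃ v, x + v ∈ K ∧ x - v ∈ K ∧ p = x + (1/5 : ℝ) • v := by
  obtain ⟨w, ⟨hw1, hw2⟩, rfl⟩ := hp
  obtain ⟨a, ha, c, hc, hac⟩ := hw1
  obtain ⟨c', hc', a', ha', hac'⟩ := hw2
  simp only [Set.mem_singleton_iff] at hc hc'
  subst hc hc'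
  refine ⟨w, ?_, ?_, rfl⟩
  · rw [← hac]; simpa using ha
  · rw [← hac']; simpa using ha'

/-- If the shrunken Macbeath region `M'(x) = M^{1/5}(x)` intersects
a cap `C` of `K` (cut by `⟪u,y⟫ = b`, with supporting value `m` and width `m-b`),
then `M'(x)` is contained in the 2-expansion `C²` of `C`. -/
theorem stmt5 {d : ℕ} (K : Set (EuclideanSpace ℝ (Fin d)))
    (hKconv : Convex ℝ K) (hKcomp : IsCompact K) (hKint : (interior K).Nonempty)
    (u : EuclideanSpace ℝ (Fin d)) (hu : ‖u‖ = 1) (b : ℝ)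
    (m : ℝ) (hm : m = sSup ((fun y => ⟪u, y⟫) '' K))
    (x : EuclideanSpace ℝ (Fin d)) (hx : x ∈ K)
    (hinter : (Mreg K (1 / 5) x ∩ {y ∈ K | b ≤ ⟪u, y⟫}).Nonempty) :
    Mreg K (1 / 5) x ⊆ {y ∈ K | m - 2 * (m - b) ≤ ⟪u, y⟫} := by
  have hle : ∀ y ∈ K, ⟪u, y⟫ ≤ m := by
    intro y hy
    rw [hm]
    refine le_csSup ((hKcomp.image ?_).bddAbove) ⟨y, hy, rfl⟩
    exact continuous_const.inner continuous_id
  obtain ⟨q, hqM, hqK, hqb⟩ := hinter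
  obtain ⟨w, hw1, hw2, rfl⟩ := mreg_mem hqM
  intro p hp
  obtain ⟨v, hv1, hv2, rfl⟩ := mreg_mem hp
  have hpK : x + (1/5 : ℝ) • v ∈ K := by
    have := hKconv hx hv1 (by norm_num : (0:ℝ) ≤ 4/5) (by norm_num : (0:ℝ) ≤ 1/5) (by norm_num)
    convert this using 1
    module
  refine ⟨hpK, ?_⟩
  have e1 : ⟪u, x + (1/5:ℝ) • v⟫ = ⟪u, x⟫ + (1/5) * ⟪u, v⟫ := by
    rw [inner_add_right, real_inner_smul_right]
  have e2 : ⟪u, x + (1/5:ℝ) • w⟫ = ⟪u, x⟫ + (1/5) * ⟪u, w⟫ := by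
    rw [inner_add_right, real_inner_smul_right]
  have h1 : ⟪u, x⟫ + ⟪u, v⟫ ≤ m := by
    have := hle _ hv1; rwa [inner_add_right] at this
  have h2 : ⟪u, x⟫ - ⟪u, v⟫ ≤ m := by
    have := hle _ hv2; rwa [inner_sub_right] at this
  have h3 : ⟪u, x⟫ + ⟪u, w⟫ ≤ m := by
    have := hle _ hw1; rwa [inner_add_right] at this
  have h4 : ⟪u, x⟫ ≤ m := hle _ hx
  have h5 : b ≤ ⟪u, x⟫ + (1/5) * ⟪u, w⟫ := by rwa [e2] at hqb
  rw [e1]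
  nlinarith [h1, h2, h3, h4, h5]
end

section
/- Let K ⊂ R^d be a convex body and C a cap of K. If x is any point of C, then the Macbeath region M(x) = M^1(x) is contained in the 2-expansion C² of C. -/
open MeasureTheory
open scoped Pointwise RealInnerProductSpace

/-- If `x` is a point of a cap `C` of a convex body `K`
(cut by `⟪u,y⟫ = b`, supporting value `m`, width `m - b`), then the Macbeath
region `M(x) = M^1(x)` is contained in the 2-expansion `C²` of `C`. -/
theorem stmt6 {d : ℕ} (K : Set (EuclideanSpace ℝ (Fin d)))
    (hKconv : Convex ℝ K) (hKcomp : IsCompact K) (hKint : (interior K).Nonempty)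
    (u : EuclideanSpace ℝ (Fin d)) (hu : ‖u‖ = 1) (b : ℝ)
    (m : ℝ) (hm : m = sSup ((fun y => ⟪u, y⟫) '' K))
    (x : EuclideanSpace ℝ (Fin d)) (hx : x ∈ K) (hxC : b ≤ ⟪u, x⟫) :
    Mreg K 1 x ⊆ {y ∈ K | m - 2 * (m - b) ≤ ⟪u, y⟫} := by
  rintro y ⟨v, ⟨hv1, hv2⟩, rfl⟩
  simp only [one_smul]
  obtain ⟨a, ha, x', hx', rfl⟩ := hv1
  obtain ⟨x'', hx'', k, hk, hvk⟩ := hv2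
  simp only [Set.mem_singleton_iff] at hx' hx''
  rw [hx', hx''] at hvk
  simp only at hvk
  have hy : x + (a - x) = a := by abel
  simp only [hx']
  rw [hy]
  refine ⟨ha, ?_⟩
  have hbdd : BddAbove ((fun y => ⟪u, y⟫) '' K) :=
    (hKcomp.image (Continuous.inner continuous_const continuous_id)).bddAbove
  have hkm : ⟪u, k⟫ ≤ m := hm ▸ le_csSup hbdd ⟨k, hk, rfl⟩
  have hax : a = x + x - k := by
    linear_combination (norm := module) hvk.symm
  rw [hax]
  have h1 : ⟪u, x + x - k⟫ = ⟪u, x⟫ + ⟪u, x⟫ - ⟪u, k⟫ := by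
    rw [inner_sub_right, inner_add_right]
  rw [h1]
  linarith
end

section
/- Let K ⊂ R^d be a convex body and let x ∈ K with x' ∈ M'(x) = M^{1/5}(x). Then 4δ(x)/5 ≤ δ(x') ≤ 4δ(x)/3, where δ(·) denotes distance to the boundary of K. -/
open Metric
open scoped Pointwise

/-- Concavity-type lemma: the distance to the complement of a convex set grows at least
linearly under convex combination with a point of the set. -/
lemma infDist_compl_smul_le {E : Type*} [NormedAddCommGroup E] [NormedSpace ℝ E]
    {K : Set E} (hK : Convex ℝ K) {b : E} (hb : b ∈ K) (a : E) {θ : ℝ}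
    (hθ0 : 0 < θ) (hθ1 : θ ≤ 1) :
    θ * infDist a Kᶜ ≤ infDist (θ • a + (1 - θ) • b) Kᶜ := by
  rcases Set.eq_empty_or_nonempty Kᶜ with h | hne
  · simp [h, infDist_empty]
  by_contra hlt
  push_neg at hlt
  obtain ⟨y, hyc, hy⟩ := (infDist_lt_iff hne).1 hlt
  set c := θ • a + (1 - θ) • b with hc
  set a' := a + θ⁻¹ • (y - c) with ha'
  have hdist : dist a a' < infDist a Kᶜ := by
    have h1 : dist a a' = θ⁻¹ * dist c y := by
      have h2 : a - a' = θ⁻¹ • (c - y) := by rw [ha']; module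
      rw [dist_eq_norm, h2, norm_smul, Real.norm_eq_abs, abs_of_pos (inv_pos.2 hθ0),
        ← dist_eq_norm]
    have h3 := mul_lt_mul_of_pos_left hy (inv_pos.2 hθ0)
    rw [inv_mul_cancel_left₀ hθ0.ne'] at h3
    rw [h1]; exact h3
  have ha'K : a' ∈ K := by
    by_contra h'
    exact (notMem_of_dist_lt_infDist hdist) h'
  have hyK : y ∈ K := by
    have : y = θ • a' + (1 - θ) • b := by
      rw [ha', smul_add, smul_smul, mul_inv_cancel₀ hθ0.ne', one_smul, hc]
      abel
    rw [this]
    exact hK ha'K hb (le_of_lt hθ0) (by linarith) (by ring)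
  exact hyc hyK

lemma infDist_frontier_eq_compl {E : Type*} [NormedAddCommGroup E] [NormedSpace ℝ E]
    [FiniteDimensional ℝ E] {K : Set E} {p : E} (hp : p ∈ K) (hKne : K ≠ Set.univ) :
    infDist p (frontier K) = infDist p Kᶜ := by
  obtain ⟨y, hyf, hyd⟩ := exists_mem_frontier_infDist_compl_eq_dist hp hKne
  refine le_antisymm ?_ ?_
  · rw [hyd]; exact infDist_le_dist_of_mem hyf
  · rw [← infDist_closure (s := Kᶜ)]
    refine infDist_le_infDist_of_subset ?_ ⟨y, hyf⟩
    rw [frontier_eq_closure_inter_closure]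
    exact Set.inter_subset_right

/-- If `x ∈ K` and `x' ∈ M'(x) = M^{1/5}(x)`, then
`4δ(x)/5 ≤ δ(x') ≤ 4δ(x)/3`, where `δ(·)` is the distance to `∂K`. -/
theorem stmt7 {d : ℕ} (K : Set (EuclideanSpace ℝ (Fin d)))
    (hKconv : Convex ℝ K) (hKcomp : IsCompact K) (hKint : (interior K).Nonempty)
    (x x' : EuclideanSpace ℝ (Fin d)) (hx : x ∈ K) (hx' : x' ∈ Mreg K (1 / 5) x) :
    4 * infDist x (frontier K) / 5 ≤ infDist x' (frontier K) ∧
      infDist x' (frontier K) ≤ 4 * infDist x (frontier K) / 3 := by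
  obtain ⟨v, ⟨hv1, hv2⟩, hx'eq⟩ := hx'
  obtain ⟨a, haK, xx, hxx, haeq⟩ := Set.mem_sub.1 hv1
  obtain ⟨xx2, hxx2, b, hbK, hbeq⟩ := Set.mem_sub.1 hv2
  rw [Set.mem_singleton_iff] at hxx hxx2
  rw [hxx] at haeq
  rw [hxx2] at hbeq
  rcases eq_or_ne K Set.univ with hU | hKne
  · have : frontier K = (∅ : Set _) := by rw [hU, frontier_univ]
    rw [this, infDist_empty]
    norm_num
  have hx'rep : x' = (4/5 : ℝ) • x + (1 - (4/5 : ℝ)) • a := by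
    rw [← hx'eq, ← haeq]; module
  have hxrep : x = (5/6 : ℝ) • x' + (1 - (5/6 : ℝ)) • b := by
    rw [← hx'eq, ← hbeq]; module
  have hx'K : x' ∈ K := by
    rw [hx'rep]
    exact hKconv hx haK (by norm_num) (by norm_num) (by norm_num)
  have h1 : (4/5 : ℝ) * infDist x Kᶜ ≤ infDist x' Kᶜ := by
    rw [hx'rep]
    exact infDist_compl_smul_le hKconv haK x (by norm_num) (by norm_num)
  have h2 : (5/6 : ℝ) * infDist x' Kᶜ ≤ infDist x Kᶜ := by
    conv_rhs => rw [hxrep]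
    exact infDist_compl_smul_le hKconv hbK x' (by norm_num) (by norm_num)
  have hnn : 0 ≤ infDist x Kᶜ := infDist_nonneg
  rw [infDist_frontier_eq_compl hx hKne, infDist_frontier_eq_compl hx'K hKne]
  constructor <;> linarith
end

section
/- Let K ⊂ R^d be a convex body and K* its polar with respect to the centroid of K. Then vol(K)·vol(K*) is bounded above and below by positive constants depending only on d. -/
open MeasureTheory
open scoped RealInnerProductSpace

/-- The polar of a set `K` with respect to a point `x`. -/
def polarAt {d : ℕ} (x : EuclideanSpace ℝ (Fin d)) (K : Set (EuclideanSpace ℝ (Fin d))) :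
    Set (EuclideanSpace ℝ (Fin d)) :=
  {u | ∀ v ∈ K, ⟪u, v - x⟫ ≤ 1}

/-!
Translate `K` so that its centroid is `0`. Comparing a linear functional `f` with its minimum
over `K` and over the half-size copy of `K` at a point `v` shows that `-2⁻⁽ᵈ⁺¹⁾ v ∈ K` for every
`v ∈ K`. Take a `d`-tuple of points of `K` maximising the absolute value of the determinant:
by Cramer's rule all points of `K` have coordinates in `[-1, 1]` in this basis, and by the
reflection property `K` contains a small cube of that basis. In these coordinates `K` and its
polar are therefore sandwiched between explicit cubes, and the volume product does not change
under linear maps, since the polar transforms by the inverse adjoint.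
-/

open Set Module

section Convex

variable {E : Type*} [AddCommGroup E] [Module ℝ E] {C : Set E}

theorem Convex.smul_mem_of_neg_smul_mem (hconv : Convex ℝ C) {x : E} {t r : ℝ} (hx : x ∈ C)
    (hx' : -(t • x) ∈ C) (ht : 0 ≤ t) (hr : r ∈ Icc (-t) 1) : r • x ∈ C := by
  have hpos : 0 < 1 + t := by linarith
  convert hconv hx' hx (a := (1 - r) / (1 + t)) (b := (r + t) / (1 + t))
    (div_nonneg (by linarith [hr.2]) hpos.le) (div_nonneg (by linarith [hr.1]) hpos.le)
    (by field_simp; ring) using 1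
  rw [smul_neg, smul_smul, ← neg_smul, ← add_smul]
  congr 1
  field_simp
  ring

theorem Convex.image_homothety_subset (hconv : Convex ℝ C) {v : E} (hv : v ∈ C) {r : ℝ}
    (hr : r ∈ Icc 0 1) : AffineMap.homothety v r '' C ⊆ C := by
  rintro _ ⟨x, hx, rfl⟩
  rw [AffineMap.homothety_eq_lineMap]
  exact hconv.lineMap_mem hv hx hr

theorem Convex.sum_smul_mem_of_sum_le_one (hconv : Convex ℝ C) (h0 : 0 ∈ C) {ι : Type*}
    [Fintype ι] {w : ι → ℝ} {z : ι → E} (hw₀ : ∀ i, 0 ≤ w i) (hw₁ : ∑ i, w i ≤ 1)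
    (hz : ∀ i, z i ∈ C) : ∑ i, w i • z i ∈ C := by
  rcases (Finset.sum_nonneg fun i _ => hw₀ i).eq_or_lt with hsum | hsum
  · have hw : ∀ i, w i = 0 := fun i =>
      (Finset.sum_eq_zero_iff_of_nonneg fun i _ => hw₀ i).mp hsum.symm i (Finset.mem_univ i)
    simpa [hw] using h0
  · have hmass := hconv.centerMass_mem (fun i _ => hw₀ i) hsum fun i _ => hz i
    convert hconv.smul_mem_of_zero_mem h0 hmass ⟨hsum.le, hw₁⟩ using 1
    rw [Finset.centerMass, smul_smul, mul_inv_cancel₀ hsum.ne', one_smul]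

theorem Convex.sum_smul_mem_of_abs_le (hconv : Convex ℝ C) (h0 : 0 ∈ C) {ι : Type*} [Fintype ι]
    {v : ι → E} {t : ℝ} (hv : ∀ i r, |r| ≤ t → r • v i ∈ C) {s : ι → ℝ}
    (hs : ∀ i, |s i| ≤ t / (Fintype.card ι + 1)) : ∑ i, s i • v i ∈ C := by
  set n : ℝ := Fintype.card ι + 1
  have hn : 0 < n := by positivity
  have hsum : ∑ i, s i • v i = ∑ i : ι, n⁻¹ • ((n * s i) • v i) := by
    simp only [smul_smul, inv_mul_cancel_left₀ hn.ne']
  rw [hsum]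
  refine hconv.sum_smul_mem_of_sum_le_one h0 (fun _ => by positivity) ?_ fun i => hv i _ ?_
  · rw [Finset.sum_const, Finset.card_univ, nsmul_eq_mul, ← div_eq_mul_inv, div_le_one hn]
    linarith
  · rw [abs_mul, abs_of_pos hn, ← le_div_iff₀' hn]
    exact hs i

end Convex

section Centroid

variable {E : Type*} [NormedAddCommGroup E] [NormedSpace ℝ E] [FiniteDimensional ℝ E]
  [MeasurableSpace E] [BorelSpace E] {μ : Measure E} [μ.IsAddHaarMeasure] {C : Set E}

theorem measureReal_image_homothety (v : E) (r : ℝ) (s : Set E) :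
    μ.real (AffineMap.homothety v r '' s) = |r| ^ finrank ℝ E * μ.real s := by
  rw [measureReal_def, Measure.addHaar_image_homothety, ENNReal.toReal_mul,
    ENNReal.toReal_ofReal (by positivity), measureReal_def, abs_pow]

theorem Convex.inv_two_pow_mul_le_neg_of_setIntegral_eq_zero (hconv : Convex ℝ C)
    (hcomp : IsCompact C) (hμ : μ C ≠ 0) (hcent : ∫ x in C, x ∂μ = 0) (f : E →L[ℝ] ℝ)
    {v w : E} (hv : v ∈ C) (hw : IsMinOn f C w) :
    (2 ^ (finrank ℝ E + 1) : ℝ)⁻¹ * f v ≤ -f w := by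
  set m := -f w
  set V := μ.real C
  have hV : 0 < V := ENNReal.toReal_pos hμ hcomp.measure_lt_top.ne
  have hint : IntegrableOn (fun x => f x + m) C μ :=
    (f.continuous.add continuous_const).continuousOn.integrableOn_compact hcomp
  have hnonneg : ∀ x ∈ C, 0 ≤ f x + m := fun x hx => by
    simp only [m]
    linarith [isMinOn_iff.mp hw x hx]
  have hmean : ∫ x in C, (f x + m) ∂μ = m * V := by
    have : IsFiniteMeasure (μ.restrict C) := isFiniteMeasure_restrict.mpr hcomp.measure_lt_top.ne
    rw [integral_add (f.continuous.continuousOn.integrableOn_compact hcomp) (integrable_const m),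
      f.integral_comp_comm (φ := fun x => x)
        (continuous_id.continuousOn.integrableOn_compact hcomp),
      hcent, map_zero, setIntegral_const, smul_eq_mul, zero_add, mul_comm]
  have hm : 0 ≤ m := by
    have := setIntegral_nonneg (μ := μ) hcomp.measurableSet hnonneg
    rw [hmean] at this
    exact nonneg_of_mul_nonneg_left this hV
  set H := AffineMap.homothety v (2⁻¹ : ℝ) '' C
  have hHC : H ⊆ C := hconv.image_homothety_subset hv ⟨by norm_num, by norm_num⟩
  have hHμ : μ.real H = (2 ^ finrank ℝ E : ℝ)⁻¹ * V := by
    rw [measureReal_image_homothety, abs_of_pos (by norm_num), inv_pow]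
  have hH : f v / 2 * μ.real H ≤ ∫ x in H, (f x + m) ∂μ := by
    refine setIntegral_ge_of_const_le_real (hcomp.image
      (AffineMap.homothety v (2⁻¹ : ℝ)).continuous_of_finiteDimensional).measurableSet
      (measure_ne_top_of_subset hHC hcomp.measure_lt_top.ne) ?_ (hint.mono_set hHC)
    rintro _ ⟨x, hx, rfl⟩
    have hfx : f (AffineMap.homothety v (2⁻¹ : ℝ) x) = (f v + f x) / 2 := by
      rw [AffineMap.homothety_apply, vsub_eq_sub, vadd_eq_add, map_add, map_smul, map_sub,
        smul_eq_mul]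
      ring
    rw [hfx]
    linarith [hnonneg x hx]
  have hHle : ∫ x in H, (f x + m) ∂μ ≤ ∫ x in C, (f x + m) ∂μ :=
    setIntegral_mono_set hint ((ae_restrict_mem hcomp.measurableSet).mono hnonneg)
      (Filter.Eventually.of_forall hHC)
  have : (2 ^ (finrank ℝ E + 1) : ℝ)⁻¹ * f v * V ≤ m * V := by
    calc _ = f v / 2 * ((2 ^ finrank ℝ E : ℝ)⁻¹ * V) := by rw [pow_succ]; ring
      _ ≤ m * V := by rw [← hHμ, ← hmean]; exact hH.trans hHle
  exact le_of_mul_le_mul_right this hV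

theorem Convex.neg_smul_mem_of_setIntegral_eq_zero (hconv : Convex ℝ C) (hcomp : IsCompact C)
    (hμ : μ C ≠ 0) (hcent : ∫ x in C, x ∂μ = 0) {x : E} (hx : x ∈ C) :
    -((2 ^ (finrank ℝ E + 1) : ℝ)⁻¹ • x) ∈ C := by
  by_contra hnot
  obtain ⟨f, u, hfC, hfu⟩ := geometric_hahn_banach_closed_point hconv hcomp.isClosed hnot
  obtain ⟨w, hw, hwmin⟩ := hcomp.exists_isMinOn ⟨x, hx⟩ (-f).continuous.continuousOn
  have := hconv.inv_two_pow_mul_le_neg_of_setIntegral_eq_zero hcomp hμ hcent (-f) hx hwmin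
  rw [map_neg, map_smul, smul_eq_mul] at hfu
  rw [neg_apply, neg_apply] at this
  linarith [hfC w hw]

theorem span_eq_top_of_measure_ne_zero (hμ : μ C ≠ 0) : Submodule.span ℝ C = ⊤ := by
  by_contra h
  exact hμ (measure_mono_null Submodule.subset_span (Measure.addHaar_submodule μ _ h))

end Centroid

theorem setIntegral_image_neg_add_eq_zero {E : Type*} [NormedAddCommGroup E] [NormedSpace ℝ E]
    [CompleteSpace E] [MeasurableSpace E] [BorelSpace E] {μ : Measure E} [μ.IsAddLeftInvariant]
    {K : Set E} (hK : μ K ≠ ⊤) (hK₀ : μ K ≠ 0) (hint : IntegrableOn (fun x => x) K μ) :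
    ∫ x in (fun x => -((μ K).toReal⁻¹ • ∫ y in K, y ∂μ) + x) '' K, x ∂μ = 0 := by
  set c := (μ K).toReal⁻¹ • ∫ y in K, y ∂μ
  have : IsFiniteMeasure (μ.restrict K) := isFiniteMeasure_restrict.mpr hK
  rw [(measurePreserving_add_left μ (-c)).setIntegral_image_emb
    (measurableEmbedding_addLeft (-c)) (fun x => x) K, integral_add (integrable_const _) hint,
    setIntegral_const, smul_neg, measureReal_def, smul_inv_smul₀ (ENNReal.toReal_pos hK₀ hK).ne',
    neg_add_cancel]

theorem exists_basis_forall_mem_abs_repr_le_one {E : Type*} [NormedAddCommGroup E]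
    [NormedSpace ℝ E] [FiniteDimensional ℝ E] {ι : Type*} [Fintype ι] [DecidableEq ι]
    (e : Basis ι ℝ E) {C : Set E} (hcomp : IsCompact C) (hspan : Submodule.span ℝ C = ⊤) :
    ∃ b : Basis ι ℝ E, (∀ i, b i ∈ C) ∧ ∀ x ∈ C, ∀ i, |b.repr x i| ≤ 1 := by
  let b₀ := (Basis.ofSpan hspan.ge).reindex ((Basis.ofSpan hspan.ge).indexEquiv e)
  have hb₀ : ∀ i, b₀ i ∈ C := fun i => by
    rw [Basis.reindex_apply]
    exact Basis.ofSpan_subset _ (mem_range_self _)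
  have hcont : Continuous fun v : ι → E => |e.det v| := by
    have : Continuous e.equivFun := LinearMap.continuous_of_finiteDimensional _
    have hmat (v : ι → E) : e.toMatrix v = Matrix.of fun i j => e.equivFun (v j) i := rfl
    simp only [e.det_apply, hmat]
    exact (continuous_matrix fun i j => (continuous_apply i).comp
      (this.comp (continuous_apply j))).matrix_det.abs
  obtain ⟨v, hv, hmax⟩ := (isCompact_univ_pi fun _ => hcomp).exists_isMaxOn
    ⟨b₀, fun i _ => hb₀ i⟩ hcont.continuousOn
  have hmax' : ∀ w : ι → E, (∀ i, w i ∈ C) → |e.det w| ≤ |e.det v| :=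
    fun w hw => hmax (fun i _ => hw i)
  have hdet : e.det v ≠ 0 := fun h => (e.isUnit_det b₀).ne_zero <|
    abs_nonpos_iff.mp (by simpa [h] using hmax' b₀ hb₀)
  obtain ⟨hli, hsp⟩ := e.is_basis_iff_det.mpr (Ne.isUnit hdet)
  refine ⟨Basis.mk hli hsp.ge, fun i => by simpa using hv i (mem_univ i), fun x hx i => ?_⟩
  -- Cramer's rule: `e.det (update v i x) = e.det v * (i-th coordinate of x)`
  have hcramer := congr($(e.det_smul_mk_coord_eq_det_update hli hsp.ge i) x)
  simp only [LinearMap.smul_apply, Basis.coord_apply, smul_eq_mul,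
    MultilinearMap.toLinearMap_apply, AlternatingMap.coe_multilinearMap] at hcramer
  have hle := hmax' (Function.update v i x) fun j => by
    rcases eq_or_ne j i with rfl | hj
    · simpa using hx
    · simpa [hj] using hv j (mem_univ j)
  rw [← hcramer, abs_mul] at hle
  exact (mul_le_iff_le_one_right (abs_pos.mpr hdet)).mp hle

theorem LinearMap.det_adjoint {𝕜 E : Type*} [RCLike 𝕜] [NormedAddCommGroup E]
    [InnerProductSpace 𝕜 E] [FiniteDimensional 𝕜 E] (f : E →ₗ[𝕜] E) :
    LinearMap.det (LinearMap.adjoint f) = starRingEnd 𝕜 (LinearMap.det f) := by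
  let b := stdOrthonormalBasis 𝕜 E
  rw [← LinearMap.det_toMatrix b.toBasis, LinearMap.toMatrix_adjoint, Matrix.det_conjTranspose,
    LinearMap.det_toMatrix]
  rfl

section Polar

variable {d : ℕ}

theorem polarAt_antitone (x : EuclideanSpace ℝ (Fin d)) : Antitone (polarAt x) :=
  fun _ _ hST _ hu v hv => hu v (hST hv)

theorem polarAt_eq_polarAt_zero_image (c : EuclideanSpace ℝ (Fin d))
    (K : Set (EuclideanSpace ℝ (Fin d))) : polarAt c K = polarAt 0 ((fun x => -c + x) '' K) := by
  ext u
  simp only [polarAt, mem_ofPred_eq, forall_mem_image, sub_eq_neg_add, neg_zero, zero_add]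

theorem polarAt_zero_image (T : EuclideanSpace ℝ (Fin d) →ₗ[ℝ] EuclideanSpace ℝ (Fin d))
    (S : Set (EuclideanSpace ℝ (Fin d))) :
    polarAt 0 (T '' S) = LinearMap.adjoint T ⁻¹' polarAt 0 S := by
  ext u
  simp [polarAt, LinearMap.adjoint_inner_left]

theorem volume_image_mul_volume_polarAt_zero_image
    {T : EuclideanSpace ℝ (Fin d) →ₗ[ℝ] EuclideanSpace ℝ (Fin d)} (hT : LinearMap.det T ≠ 0)
    (S : Set (EuclideanSpace ℝ (Fin d))) :
    volume (T '' S) * volume (polarAt 0 (T '' S)) = volume S * volume (polarAt 0 S) := by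
  rw [polarAt_zero_image, Measure.addHaar_image_linearMap,
    Measure.addHaar_preimage_linearMap _ (by rwa [LinearMap.det_adjoint]), LinearMap.det_adjoint,
    conj_trivial, mul_mul_mul_comm, ← ENNReal.ofReal_mul (abs_nonneg _), ← abs_mul,
    mul_inv_cancel₀ hT, abs_one, ENNReal.ofReal_one, one_mul]

variable (d) in
def cube (r : ℝ) : Set (EuclideanSpace ℝ (Fin d)) := {x | ∀ i, |x i| ≤ r}

theorem volume_cube (r : ℝ) : volume (cube d r) = ENNReal.ofReal (2 * r) ^ d := by
  have : cube d r = WithLp.ofLp ⁻¹' univ.pi fun _ => Icc (-r) r := by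
    ext x
    simp [cube, abs_le, Pi.le_def, forall_and]
  rw [this, (PiLp.volume_preserving_ofLp (Fin d)).measure_preimage
    (MeasurableSet.univ_pi fun _ => measurableSet_Icc).nullMeasurableSet, volume_pi_pi]
  simp [Real.volume_Icc, two_mul]

theorem polarAt_zero_cube_subset {r : ℝ} (hr : 0 < r) : polarAt 0 (cube d r) ⊆ cube d r⁻¹ := by
  intro u hu i
  have hmem (s : ℝ) (hs : |s| ≤ r) : EuclideanSpace.single i s ∈ cube d r := fun j => by
    by_cases h : j = i <;> simp [h, hs, hr.le]
  have h₁ := hu _ (hmem r (abs_of_pos hr).le)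
  have h₂ := hu _ (hmem (-r) (by rw [abs_neg, abs_of_pos hr]))
  simp only [sub_zero, EuclideanSpace.inner_single_right, conj_trivial] at h₁ h₂
  rw [← one_div, le_div_iff₀ hr]
  cases abs_cases (u i) <;> nlinarith

theorem cube_subset_polarAt_zero_cube_one {r : ℝ} (hr : d * r ≤ 1) :
    cube d r ⊆ polarAt 0 (cube d 1) := by
  intro u hu v hv
  calc ⟪u, v - 0⟫ = ∑ i, u i * v i := by simp [PiLp.inner_apply, mul_comm]
    _ ≤ ∑ i, |u i| * |v i| := Finset.sum_le_sum fun i _ => (le_abs_self _).trans (abs_mul _ _).le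
    _ ≤ ∑ i : Fin d, r := Finset.sum_le_sum fun i _ => by
          nlinarith [hu i, hv i, abs_nonneg (u i), abs_nonneg (v i)]
    _ ≤ 1 := by simpa using hr

theorem volume_mul_volume_polarAt_zero_mem_Icc_of_cube_subset
    {S : Set (EuclideanSpace ℝ (Fin d))} {a : ℝ} (ha : 0 < a) (hin : cube d a ⊆ S)
    (hout : S ⊆ cube d 1) :
    (volume S).toReal * (volume (polarAt 0 S)).toReal ∈
      Icc ((4 * a / (d + 1)) ^ d) ((4 / a) ^ d) := by
  have hcube {r : ℝ} (hr : 0 ≤ r) : (volume (cube d r)).toReal = (2 * r) ^ d := by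
    rw [volume_cube, ← ENNReal.ofReal_pow (by positivity), ENNReal.toReal_ofReal (by positivity)]
  have hfin (r : ℝ) : volume (cube d r) ≠ ⊤ := by
    rw [volume_cube]
    exact ENNReal.pow_ne_top ENNReal.ofReal_ne_top
  have hpolar_out : polarAt 0 S ⊆ cube d a⁻¹ :=
    (polarAt_antitone 0 hin).trans (polarAt_zero_cube_subset ha)
  have hpolar_in : cube d (d + 1 : ℝ)⁻¹ ⊆ polarAt 0 S :=
    (cube_subset_polarAt_zero_cube_one
      (by rw [← div_eq_mul_inv, div_le_one (by positivity)]; linarith)).trans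
      (polarAt_antitone 0 hout)
  have h₁ : (volume S).toReal ≤ (2 * 1) ^ d :=
    hcube zero_le_one ▸ ENNReal.toReal_mono (hfin 1) (measure_mono hout)
  have h₂ : (2 * a) ^ d ≤ (volume S).toReal :=
    hcube ha.le ▸ ENNReal.toReal_mono (measure_ne_top_of_subset hout (hfin 1)) (measure_mono hin)
  have h₃ : (volume (polarAt 0 S)).toReal ≤ (2 * a⁻¹) ^ d :=
    hcube (r := a⁻¹) (by positivity) ▸ ENNReal.toReal_mono (hfin _) (measure_mono hpolar_out)
  have h₄ : (2 * (d + 1 : ℝ)⁻¹) ^ d ≤ (volume (polarAt 0 S)).toReal :=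
    hcube (r := (d + 1 : ℝ)⁻¹) (by positivity) ▸
      ENNReal.toReal_mono (measure_ne_top_of_subset hpolar_out (hfin _)) (measure_mono hpolar_in)
  constructor
  · calc (4 * a / (d + 1)) ^ d = (2 * a) ^ d * (2 * (d + 1 : ℝ)⁻¹) ^ d := by
          rw [← mul_pow]; ring_nf
      _ ≤ _ := mul_le_mul h₂ h₄ (by positivity) ENNReal.toReal_nonneg
  · calc _ ≤ (2 * 1) ^ d * (2 * a⁻¹) ^ d := mul_le_mul h₁ h₃ ENNReal.toReal_nonneg (by positivity)
      _ = (4 / a) ^ d := by rw [← mul_pow]; ring_nf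

theorem Convex.volume_mul_volume_polarAt_zero_mem_Icc {C : Set (EuclideanSpace ℝ (Fin d))}
    (hconv : Convex ℝ C) (hcomp : IsCompact C) (hvol : volume C ≠ 0) (hcent : ∫ x in C, x = 0) :
    (volume C).toReal * (volume (polarAt 0 C)).toReal ∈
      Icc ((4 / (2 ^ (d + 1) * ((d : ℝ) + 1) ^ 2)) ^ d)
        ((4 * 2 ^ (d + 1) * ((d : ℝ) + 1)) ^ d) := by
  set τ : ℝ := (2 ^ (d + 1))⁻¹
  have hτ : 0 < τ := by positivity
  have hτ₁ : τ ≤ 1 := inv_le_one_of_one_le₀ (one_le_pow₀ one_le_two)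
  have hrefl : ∀ x ∈ C, -(τ • x) ∈ C := fun x hx => by
    simpa [finrank_euclideanSpace_fin] using
      hconv.neg_smul_mem_of_setIntegral_eq_zero hcomp hvol hcent hx
  obtain ⟨x₀, hx₀⟩ := nonempty_of_measure_ne_zero hvol
  have h0 : (0 : EuclideanSpace ℝ (Fin d)) ∈ C := by
    simpa using hconv.smul_mem_of_neg_smul_mem hx₀ (hrefl x₀ hx₀) hτ.le
      ⟨by linarith, zero_le_one⟩
  obtain ⟨b, hbC, hrepr⟩ := exists_basis_forall_mem_abs_repr_le_one
    (EuclideanSpace.basisFun (Fin d) ℝ).toBasis hcomp (span_eq_top_of_measure_ne_zero hvol)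
  let T := b.equivFun.trans (WithLp.linearEquiv 2 ℝ (Fin d → ℝ)).symm
  have hout : T '' C ⊆ cube d 1 := by
    rintro _ ⟨x, hx, rfl⟩ i
    simpa [T] using hrepr x hx i
  have hin : cube d (τ / (d + 1)) ⊆ T '' C := by
    refine fun s hs => ⟨T.symm s, ?_, T.apply_symm_apply s⟩
    simp only [T, LinearEquiv.trans_symm, LinearEquiv.trans_apply, Basis.equivFun_symm_apply]
    refine hconv.sum_smul_mem_of_abs_le h0 (fun i r hr => hconv.smul_mem_of_neg_smul_mem (hbC i)
      (hrefl _ (hbC i)) hτ.le ⟨neg_le_of_abs_le hr, (le_of_abs_le hr).trans hτ₁⟩) fun i => ?_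
    simpa using hs i
  have hprod := volume_image_mul_volume_polarAt_zero_image (LinearEquiv.isUnit_det' T).ne_zero C
  rw [LinearEquiv.coe_coe] at hprod
  rw [← ENNReal.toReal_mul, ← hprod, ENNReal.toReal_mul]
  convert volume_mul_volume_polarAt_zero_mem_Icc_of_cube_subset (by positivity) hin hout
    using 3 <;> simp only [τ] <;> field_simp

end Polar

/-- There are constants `c₁, c₂ > 0` depending only on `d` such
that for every convex body `K ⊆ ℝ^d`, with `K*` the polar of `K` with respect
to the centroid of `K`, `c₁ ≤ vol(K)·vol(K*) ≤ c₂`. -/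
theorem stmt10 (d : ℕ) :
    ∃ c₁ > (0 : ℝ), ∃ c₂ > (0 : ℝ),
      ∀ (K : Set (EuclideanSpace ℝ (Fin d))),
        Convex ℝ K → IsCompact K → (interior K).Nonempty →
        ∀ (c : EuclideanSpace ℝ (Fin d)), c = (volume K).toReal⁻¹ • ∫ y in K, y →
          c₁ ≤ (volume K).toReal * (volume (polarAt c K)).toReal ∧
            (volume K).toReal * (volume (polarAt c K)).toReal ≤ c₂ := by
  refine ⟨(4 / (2 ^ (d + 1) * (d + 1) ^ 2)) ^ d, by positivity,
    (4 * 2 ^ (d + 1) * (d + 1)) ^ d, by positivity, ?_⟩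
  intro K hconv hcomp hint c hc
  have hK₀ : volume K ≠ 0 := (Measure.measure_pos_of_nonempty_interior _ hint).ne'
  have hvol : volume ((fun x => -c + x) '' K) = volume K := by
    rw [image_add_left, measure_preimage_add]
  have hcent : ∫ x in (fun x => -c + x) '' K, x = 0 := hc ▸
    setIntegral_image_neg_add_eq_zero hcomp.measure_lt_top.ne hK₀
      (continuous_id.continuousOn.integrableOn_compact hcomp)
  rw [polarAt_eq_polarAt_zero_image, ← hvol]
  exact (hconv.translate (-c)).volume_mul_volume_polarAt_zero_mem_Icc
    (hcomp.image (continuous_const_add (-c))) (hvol ▸ hK₀) hcent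
end

section
/- Let z ∈ R^d lie on a ray from the origin O in direction v (a unit vector), and let K be a (d−1)-dimensional convex body lying in a hyperplane with unit normal u, whose relative interior intersects the segment Oz at a point x. Let G be the polar (with respect to O) of the set of hyperplanes through z not meeting the relative interior of K, let K̄ be the orthogonal projection of K onto the hyperplane through O orthogonal to v, and let h be the hyperplane parallel to K's hyperplane passing through z. Then G − h* = α·K̄*, where α = ‖xz‖/‖Oz‖, h* = u/⟨u,z⟩ is the polar point of h, and K̄* is the polar of K̄ within the hyperplane v^⊥ through the origin. -/
open scoped Pointwise RealInnerProductSpace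

/-! Write `x = b • z` with `0 < b < 1` and `h = ⟪u, z⟫⁻¹ • u`, so that `⟪h, z⟫ = 1` and `⟪h, ·⟫ ≡ b`
on the hyperplane of `K`. Translating by `-h` turns the constraints defining `G` into
`⟪w, z⟫ = 0` and `⟪w, p⟫ ≤ 1 - b` on `K`. On `v^⊥` the functional `⟪w, ·⟫` does not see the
projection `K → K̄`, so both sides are the set of `w ∈ v^⊥` with `⟪w, ·⟫ ≤ 1 - b` on `K`, and
`1 - b = ‖xz‖ / ‖Oz‖`. -/

section

variable {E : Type*} [NormedAddCommGroup E] [InnerProductSpace ℝ E]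

def orthPolar (v : E) (K : Set E) (r : ℝ) : Set E :=
  {q | ⟪q, v⟫ = 0 ∧ ∀ p ∈ K, ⟪q, p⟫ ≤ r}

lemma orthPolar_image_orthProj (v : E) (K : Set E) (r : ℝ) :
    {q | ⟪q, v⟫ = 0 ∧ ∀ p ∈ (fun p => p - ⟪v, p⟫ • v) '' K, ⟪q, p⟫ ≤ r} = orthPolar v K r := by
  ext q
  simp only [orthPolar, Set.mem_ofPred_eq, Set.forall_mem_image, and_congr_right_iff]
  intro hqv
  simp only [inner_sub_right, real_inner_smul_right, hqv, mul_zero, sub_zero]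

lemma orthPolar_smul_left {t : ℝ} (ht : t ≠ 0) (v : E) (K : Set E) (r : ℝ) :
    orthPolar (t • v) K r = orthPolar v K r := by
  simp only [orthPolar, real_inner_smul_right, mul_eq_zero, ht, false_or]

lemma smul_orthPolar {α : ℝ} (hα : 0 < α) (v : E) (K : Set E) (r : ℝ) :
    α • orthPolar v K r = orthPolar v K (α * r) := by
  ext w
  simp only [Set.mem_smul_set_iff_inv_smul_mem₀ hα.ne', orthPolar, Set.mem_ofPred_eq,
    real_inner_smul_left, mul_eq_zero, inv_eq_zero, hα.ne', false_or,
    inv_mul_le_iff₀ hα]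

lemma dualCapPolar_sub_singleton {z h : E} {K : Set E} {b : ℝ} (hhz : ⟪h, z⟫ = 1)
    (hhK : ∀ p ∈ K, ⟪h, p⟫ = b) :
    {w | ⟪w, z⟫ = 1 ∧ ∀ p ∈ K, ⟪w, p⟫ ≤ 1} - {h} = orthPolar z K (1 - b) := by
  ext w
  rw [Set.sub_singleton]
  constructor
  · rintro ⟨g, ⟨hgz, hgK⟩, rfl⟩
    refine ⟨by rw [inner_sub_left, hgz, hhz, sub_self], fun p hp => ?_⟩
    rw [inner_sub_left, hhK p hp]
    linarith [hgK p hp]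
  · rintro ⟨hwz, hwK⟩
    refine ⟨w + h, ⟨by rw [inner_add_left, hwz, hhz, zero_add], fun p hp => ?_⟩,
      add_sub_cancel_right w h⟩
    rw [inner_add_left, hhK p hp]
    linarith [hwK p hp]

lemma dist_smul_self_div_norm {z : E} (hz : z ≠ 0) {b : ℝ} (hb : b ≤ 1) :
    dist (b • z) z / ‖z‖ = 1 - b := by
  rw [dist_eq_norm, show b • z - z = (b - 1) • z by module, norm_smul, Real.norm_eq_abs,
    abs_of_nonpos (by linarith), mul_div_cancel_right₀ _ (norm_ne_zero_iff.mpr hz), neg_sub]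

end

theorem stmt14_general {d : ℕ} (u v z x : EuclideanSpace ℝ (Fin d))
    (t : ℝ) (ht : 0 < t) (hz : z = t • v)
    (K : Set (EuclideanSpace ℝ (Fin d)))
    (hKplane : ∀ p ∈ K, ⟪u, p⟫ = ⟪u, x⟫)
    (hxseg : x ∈ openSegment ℝ (0 : EuclideanSpace ℝ (Fin d)) z)
    (huz : ⟪u, z⟫ ≠ 0)
    (G Kbar KbarStar : Set (EuclideanSpace ℝ (Fin d)))
    (hG : G = {w | ⟪w, z⟫ = 1 ∧ ∀ p ∈ K, ⟪w, p⟫ ≤ 1})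
    (hKbar : Kbar = (fun p => p - ⟪v, p⟫ • v) '' K)
    (hKbarStar : KbarStar = {q | ⟪q, v⟫ = 0 ∧ ∀ p ∈ Kbar, ⟪q, p⟫ ≤ 1}) :
    G - {(⟪u, z⟫)⁻¹ • u} = (dist x z / ‖z‖) • KbarStar := by
  obtain ⟨a, b, ha, -, hab, rfl⟩ := hxseg
  rw [smul_zero, zero_add] at hKplane ⊢
  have hz0 : z ≠ 0 := by rintro rfl; exact huz (inner_zero_right u)
  have hhz : ⟪(⟪u, z⟫)⁻¹ • u, z⟫ = 1 := by rw [real_inner_smul_left, inv_mul_cancel₀ huz]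
  have hhK : ∀ p ∈ K, ⟪(⟪u, z⟫)⁻¹ • u, p⟫ = b := fun p hp => by
    rw [real_inner_smul_left, hKplane p hp, real_inner_smul_right, mul_left_comm,
      inv_mul_cancel₀ huz, mul_one]
  rw [hG, dualCapPolar_sub_singleton hhz hhK, hKbarStar, hKbar, orthPolar_image_orthProj,
    dist_smul_self_div_norm hz0 (by linarith), smul_orthPolar (by linarith), mul_one, hz,
    orthPolar_smul_left ht.ne']

/-- Let `z = t•v` (`t > 0`, `‖v‖ = 1`) lie on a ray from the
origin, and let `K` be a `(d−1)`-dimensional convex body lying in the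
hyperplane through `x` with unit normal `u`, where `x ∈ K` lies in the open
segment `Oz`. Let `G` be the polar of the dual cap of `K` with respect to `z`
(the polar points `w` of hyperplanes `{p : ⟨w,p⟩ = 1}` through `z` having `K`
on their near side), let `K̄` be the projection of `K` onto `v^⊥`, let
`K̄*` be the polar of `K̄` within `v^⊥`, and let `h* = u/⟨u,z⟩` be the polar
point of the hyperplane through `z` parallel to `K`. Then
`G − h* = α·K̄*`, where `α = ‖xz‖/‖Oz‖`. -/
theorem stmt14 {d : ℕ} (u v z x : EuclideanSpace ℝ (Fin d))
    (hu : ‖u‖ = 1) (hv : ‖v‖ = 1) (t : ℝ) (ht : 0 < t) (hz : z = t • v)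
    (K : Set (EuclideanSpace ℝ (Fin d)))
    (hKconv : Convex ℝ K) (hKcomp : IsCompact K)
    (hKplane : ∀ p ∈ K, ⟪u, p⟫ = ⟪u, x⟫)
    (hx : x ∈ K) (hxseg : x ∈ openSegment ℝ (0 : EuclideanSpace ℝ (Fin d)) z)
    (huz : ⟪u, z⟫ ≠ 0)
    (G Kbar KbarStar : Set (EuclideanSpace ℝ (Fin d)))
    (hG : G = {w | ⟪w, z⟫ = 1 ∧ ∀ p ∈ K, ⟪w, p⟫ ≤ 1})
    (hKbar : Kbar = (fun p => p - ⟪v, p⟫ • v) '' K)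
    (hKbarStar : KbarStar = {q | ⟪q, v⟫ = 0 ∧ ∀ p ∈ Kbar, ⟪q, p⟫ ≤ 1}) :
    G - {(⟪u, z⟫)⁻¹ • u} = (dist x z / ‖z‖) • KbarStar :=
  stmt14_general u v z x t ht hz K hKplane hxseg huz G Kbar KbarStar hG hKbar hKbarStar
end

section
/- Let K ⊂ R^d be a convex body in γ-canonical form for constant γ, and let ε > 0 be sufficiently small. There exists a set R of shrunken Macbeath regions M'(x) of K with δ(x) = ε such that: (i) for any v > 0, the number of regions in R of volume Θ(v) is O(ε/v), and (ii) every ray emanating from the origin intersects some region of R. -/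
/-!
Take a maximal family of points `x` with `δ(x) = ε` whose regions `M^{1/20}(x)` are pairwise
disjoint; it is finite because each region contains a ball of radius `ε/20`. On every ray from the
origin `δ` takes the value `ε` (it is at least `√γ` at the origin and vanishes outside `K`), and by
maximality the region `M^{1/20}` of such a point meets some `M^{1/20}(x)`, hence lies in
`M^{1/5}(x)`. For the count, `y ∈ M^λ(x)` is the image of `x` under a homothety of ratio `1 + λ`
centred at a point of `K`, so `δ(y) ≤ (1 + λ) δ(x)`; thus every `M^{1/20}(x)` lies in the shell
`K \ (1 - 2ε/√γ) K`, of volume `O(ε)`. As `vol M^{1/20}(x) = 4^{-d} vol M^{1/5}(x)`, at most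
`O(ε/v)` of the regions `M^{1/5}(x)` have volume at least `c₁ v`.
-/

open Function MeasureTheory Metric Set
open scoped Pointwise ENNReal

theorem nonempty_of_infDist_pos {α : Type*} [PseudoMetricSpace α] {s : Set α} {x : α}
    (h : 0 < infDist x s) : s.Nonempty :=
  nonempty_iff_ne_empty.2 fun hs => by simp [hs] at h

theorem mem_of_infDist_compl_pos {α : Type*} [PseudoMetricSpace α] {s : Set α} {x : α}
    (h : 0 < infDist x sᶜ) : x ∈ s :=
  not_not.1 fun hx => h.ne' (infDist_zero_of_mem hx)

section NormedSpace

variable {E : Type*} [NormedAddCommGroup E] [NormedSpace ℝ E] {K : Set E}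

theorem infDist_frontier_eq_infDist_compl [FiniteDimensional ℝ E] {x : E} (hx : x ∈ K)
    (hKu : K ≠ univ) : infDist x (frontier K) = infDist x Kᶜ := by
  obtain ⟨y, hy, hxy⟩ := exists_mem_frontier_infDist_compl_eq_dist hx hKu
  refine le_antisymm (hxy ▸ infDist_le_dist_of_mem hy) ?_
  rw [← infDist_closure (s := Kᶜ)]
  exact infDist_le_infDist_of_subset (frontier_compl K ▸ frontier_subset_closure) ⟨y, hy⟩

theorem infDist_compl_homothety_le (hK : Convex ℝ K) {c : E} (hc : c ∈ K) {s : ℝ} (hs : 1 ≤ s)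
    (x : E) : infDist (c + s • (x - c)) Kᶜ ≤ s * infDist x Kᶜ := by
  rcases Kᶜ.eq_empty_or_nonempty with hempty | hne
  · simp [hempty]
  have hs₀ : 0 < s := by linarith
  rw [← div_le_iff₀' hs₀]
  refine (le_infDist hne).2 fun p hp => ?_
  -- `p ∉ K` is a convex combination of `c ∈ K` and its image, so the image is not interior
  have hq : c + s • (p - c) ∈ closure Kᶜ := by
    rw [closure_compl]
    intro hq
    refine hp (interior_subset ?_)
    convert hK.combo_interior_self_mem_interior hq hc (inv_pos.2 hs₀)
      (sub_nonneg.2 (inv_le_one_of_one_le₀ hs)) (add_sub_cancel _ _) using 1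
    rw [smul_add, smul_smul, inv_mul_cancel₀ hs₀.ne']
    module
  rw [div_le_iff₀' hs₀, ← infDist_closure]
  calc infDist (c + s • (x - c)) (closure Kᶜ) ≤ dist (c + s • (x - c)) (c + s • (p - c)) :=
        infDist_le_dist_of_mem hq
    _ = s * dist x p := by
        rw [dist_eq_norm, dist_eq_norm, ← norm_smul_of_nonneg hs₀.le]
        congr 1
        module

theorem le_infDist_compl_of_mem_smul (hK : Convex ℝ K) {ρ : ℝ} (hball : closedBall 0 ρ ⊆ K)
    (hne : Kᶜ.Nonempty) {t : ℝ} (ht₀ : 0 ≤ t) (ht₁ : t < 1) {y : E} (hy : y ∈ t • K) :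
    (1 - t) * ρ ≤ infDist y Kᶜ := by
  obtain ⟨k, hk, rfl⟩ := hy
  refine (le_infDist hne).2 fun p hp => ?_
  by_contra! hlt
  have ht : 0 < 1 - t := sub_pos.2 ht₁
  have hb : (1 - t)⁻¹ • (p - t • k) ∈ closedBall (0 : E) ρ := by
    rw [mem_closedBall_zero_iff, norm_smul_of_nonneg (inv_nonneg.2 ht.le), inv_mul_le_iff₀ ht,
      ← dist_eq_norm, dist_comm]
    exact hlt.le
  apply hp
  convert hK hk (hball hb) ht₀ ht.le (add_sub_cancel _ _) using 1
  rw [smul_smul, mul_inv_cancel₀ ht.ne']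
  module

theorem exists_smul_infDist_compl_eq (hK : Convex ℝ K) (hbdd : Bornology.IsBounded K) {ρ : ℝ}
    (hball : closedBall 0 ρ ⊆ K) {w : E} (hw : w ≠ 0) {ε : ℝ} (hε : 0 < ε) (hερ : ε ≤ ρ) :
    ∃ r : ℝ, 0 ≤ r ∧ infDist (r • w) Kᶜ = ε := by
  obtain ⟨R, hR, hKR⟩ := hbdd.subset_closedBall_lt 0 0
  set r₁ := (R + 1) / ‖w‖
  have hr₁ : 0 ≤ r₁ := by positivity
  have hout : r₁ • w ∈ Kᶜ := by
    intro h
    have := mem_closedBall_zero_iff.1 (hKR h)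
    rw [norm_smul_of_nonneg hr₁, div_mul_cancel₀ _ (norm_ne_zero_iff.2 hw)] at this
    linarith
  have h0 : ε ≤ infDist ((0 : ℝ) • w) Kᶜ := by
    have h0K : (0 : E) ∈ K := hball (mem_closedBall_self (hε.le.trans hερ))
    have := le_infDist_compl_of_mem_smul hK hball ⟨_, hout⟩ le_rfl zero_lt_one
      (y := (0 : ℝ) • w) ⟨0, h0K, by simp⟩
    linarith
  have hcont : Continuous fun r : ℝ => infDist (r • w) Kᶜ :=
    (continuous_infDist_pt _).comp (continuous_id.smul continuous_const)
  obtain ⟨r, hr, hrε⟩ := intermediate_value_Icc' hr₁ hcont.continuousOn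
    ⟨(infDist_zero_of_mem hout).symm ▸ hε.le, h0⟩
  exact ⟨r, hr.1, hrε⟩

theorem addHaar_sdiff_smul_le [MeasurableSpace E] [BorelSpace E] [FiniteDimensional ℝ E]
    (μ : Measure E) [μ.IsAddHaarMeasure] (hK : Convex ℝ K) (h0 : 0 ∈ K) (hfin : μ K ≠ ∞) {t : ℝ}
    (ht₀ : 0 ≤ t) (ht₁ : t ≤ 1) :
    μ (K \ t • K) ≤ ENNReal.ofReal (Module.finrank ℝ E * (1 - t)) * μ K := by
  have hsub : t • K ⊆ K := by
    rintro _ ⟨k, hk, rfl⟩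
    exact hK.smul_mem_of_zero_mem h0 hk ⟨ht₀, ht₁⟩
  rw [measure_sdiff hsub ((hK.smul t).nullMeasurableSet (μ := μ))
      (ne_top_of_le_ne_top hfin (measure_mono hsub)),
    Measure.addHaar_smul_of_nonneg μ ht₀, tsub_le_iff_right, ← add_mul,
    ← ENNReal.ofReal_add (by nlinarith) (by positivity)]
  have hbernoulli := one_add_mul_sub_le_pow (by linarith : (-1 : ℝ) ≤ t) (Module.finrank ℝ E)
  calc μ K = 1 * μ K := (one_mul _).symm
    _ ≤ _ := by gcongr; rw [ENNReal.one_le_ofReal]; linarith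

end NormedSpace

section Packing

variable {α ι : Type*} [MeasurableSpace α] {μ : Measure α} {A : Set α} {U : ι → Set α}
  {m : ℝ≥0∞}

theorem card_mul_le_measure_of_pairwiseDisjoint {s : Finset ι}
    (hs : (s : Set ι).PairwiseDisjoint U) (hU : ∀ i ∈ s, NullMeasurableSet (U i) μ)
    (hA : ∀ i ∈ s, U i ⊆ A) (hm : ∀ i ∈ s, m ≤ μ (U i)) : s.card * m ≤ μ A :=
  calc s.card * m = ∑ _i ∈ s, m := by simp
    _ ≤ ∑ i ∈ s, μ (U i) := Finset.sum_le_sum hm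
    _ = μ (⋃ i ∈ s, U i) :=
      (measure_biUnion_finset₀ (fun _ hi _ hj hij => (hs hi hj hij).aedisjoint) hU).symm
    _ ≤ μ A := measure_mono (iUnion₂_subset hA)

theorem exists_maximal_pairwise_disjoint (S : Set ι) (hm : m ≠ 0) (hA : μ A ≠ ∞)
    (hU : ∀ z ∈ S, NullMeasurableSet (U z) μ ∧ U z ⊆ A ∧ m ≤ μ (U z)) :
    ∃ (n : ℕ) (x : Fin n → ι), (∀ i, x i ∈ S) ∧ Pairwise (Disjoint on (fun i => U (x i))) ∧
      ∀ z ∈ S, ∃ i, ¬Disjoint (U (x i)) (U z) := by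
  classical
  set packings : Set (Finset ι) := {P | ↑P ⊆ S ∧ (P : Set ι).PairwiseDisjoint U}
  obtain ⟨N, hN⟩ := ENNReal.exists_nat_gt (ENNReal.div_ne_top hA hm)
  have hbdd : BddAbove (Finset.card '' packings) := by
    refine ⟨N, ?_⟩
    rintro _ ⟨P, ⟨hPS, hP⟩, rfl⟩
    have hvol := card_mul_le_measure_of_pairwiseDisjoint hP (fun z hz => (hU z (hPS hz)).1)
      (fun z hz => (hU z (hPS hz)).2.1) (fun z hz => (hU z (hPS hz)).2.2)
    exact_mod_cast (((ENNReal.le_div_iff_mul_le (.inl hm) (.inr hA)).2 hvol).trans_lt hN).le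
  obtain ⟨P, ⟨hPS, hP⟩, hPmax⟩ :=
    Nat.sSup_mem (s := Finset.card '' packings) ⟨0, ∅, by simp [packings]⟩ hbdd
  set x : Fin P.card → ι := fun i => P.equivFin.symm i
  have hx : ∀ z ∈ P, ∃ i, x i = z := fun z hz => ⟨P.equivFin ⟨z, hz⟩, by simp [x]⟩
  refine ⟨P.card, x, fun i => hPS (P.equivFin.symm i).2,
    fun i j hij => hP (P.equivFin.symm i).2 (P.equivFin.symm j).2 ?_, fun z hz => ?_⟩
  · exact fun h => hij (P.equivFin.symm.injective (Subtype.ext h))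
  by_contra! hdisj
  have hzP : z ∉ P := by
    intro hzP
    obtain ⟨i, rfl⟩ := hx z hzP
    have hempty : U (x i) = ∅ := disjoint_self.1 (hdisj i)
    exact hm (le_zero_iff.1 (by simpa [hempty] using (hU _ hz).2.2))
  have hins : insert z P ∈ packings := by
    refine ⟨by simpa [insert_subset_iff] using ⟨hz, hPS⟩, ?_⟩
    rw [Finset.coe_insert]
    refine hP.insert fun p hp _ => ?_
    obtain ⟨i, rfl⟩ := hx p hp
    exact (hdisj i).symm
  have hle := le_csSup hbdd ⟨_, hins, rfl⟩
  rw [← hPmax, Finset.card_insert_of_notMem hzP] at hle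
  omega

end Packing

section Macbeath

variable {d : ℕ} {K : Set (EuclideanSpace ℝ (Fin d))} {lam : ℝ} {x y : EuclideanSpace ℝ (Fin d)}

theorem mem_Mreg : y ∈ Mreg K lam x ↔ ∃ v, (x + v ∈ K ∧ x - v ∈ K) ∧ y = x + lam • v := by
  simp only [Mreg, mem_image, mem_inter_iff, sub_singleton, singleton_sub]
  constructor
  · rintro ⟨_, ⟨⟨a, ha, rfl⟩, b, hb, hab⟩, rfl⟩
    refine ⟨a - x, ⟨by simpa using ha, ?_⟩, rfl⟩
    rwa [← hab, sub_sub_cancel]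
  · rintro ⟨v, ⟨h₁, h₂⟩, rfl⟩
    exact ⟨v, ⟨⟨x + v, h₁, by abel⟩, x - v, h₂, by abel⟩, rfl⟩

theorem self_mem_Mreg (hx : x ∈ K) : x ∈ Mreg K lam x :=
  mem_Mreg.2 ⟨0, by simpa using hx, by simp⟩

theorem Mreg_subset (hK : Convex ℝ K) (hlam : |lam| ≤ 1) : Mreg K lam x ⊆ K := by
  intro y hy
  obtain ⟨v, ⟨hv₁, hv₂⟩, rfl⟩ := mem_Mreg.1 hy
  obtain ⟨h₁, h₂⟩ := abs_le.1 hlam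
  convert hK hv₁ hv₂ (by linarith : 0 ≤ (1 + lam) / 2) (by linarith : 0 ≤ (1 - lam) / 2)
    (by ring) using 1
  module

theorem convex_Mreg (hK : Convex ℝ K) : Convex ℝ (Mreg K lam x) :=
  ((hK.sub (convex_singleton x)).inter ((convex_singleton x).sub hK)).affinity x lam

theorem Mreg_mul_eq_image_homothety (a b : ℝ) :
    Mreg K (a * b) x = AffineMap.homothety x a '' Mreg K b x := by
  simp only [Mreg, image_image, AffineMap.homothety_apply, vsub_eq_sub, vadd_eq_add]
  congr 1
  funext v
  module

theorem volume_Mreg_mul {a : ℝ} (ha : 0 ≤ a) (b : ℝ) :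
    volume (Mreg K (a * b) x) = ENNReal.ofReal (a ^ d) * volume (Mreg K b x) := by
  rw [Mreg_mul_eq_image_homothety, Measure.addHaar_image_homothety, finrank_euclideanSpace_fin,
    abs_of_nonneg (pow_nonneg ha d)]

theorem ball_subset_Mreg (hlam : 0 < lam) {r : ℝ} (hr : ball x r ⊆ K) :
    ball x (lam * r) ⊆ Mreg K lam x := by
  intro y hy
  have hv : ‖lam⁻¹ • (y - x)‖ < r := by
    rw [norm_smul_of_nonneg (inv_nonneg.2 hlam.le), inv_mul_lt_iff₀ hlam, ← dist_eq_norm]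
    exact hy
  refine mem_Mreg.2 ⟨lam⁻¹ • (y - x), ⟨hr ?_, hr ?_⟩, ?_⟩
  · rwa [mem_ball, dist_eq_norm, add_sub_cancel_left]
  · rwa [mem_ball, dist_eq_norm, sub_sub_cancel_left, norm_neg]
  · rw [smul_smul, mul_inv_cancel₀ hlam.ne', one_smul, add_sub_cancel]

theorem Mreg_subset_of_inter_nonempty (hK : Convex ℝ K) (hx : x ∈ K) (hy : y ∈ K)
    (h : (Mreg K (1 / 20) x ∩ Mreg K (1 / 20) y).Nonempty) :
    Mreg K (1 / 20) y ⊆ Mreg K (1 / 5) x := by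
  obtain ⟨z, hzx, hzy⟩ := h
  obtain ⟨a, ⟨ha₁, ha₂⟩, rfl⟩ := mem_Mreg.1 hzx
  obtain ⟨b, ⟨hb₁, hb₂⟩, hab⟩ := mem_Mreg.1 hzy
  have hyx : y = x + (1 / 20 : ℝ) • (a - b) := by rw [smul_sub, ← add_sub_assoc, hab]; abel
  intro u hu
  obtain ⟨w, ⟨hw₁, hw₂⟩, rfl⟩ := mem_Mreg.1 hu
  -- `x ± (a - b + w) / 4` are explicit convex combinations of `x, y, x ± a, y ∓ b, y ± w`
  refine mem_Mreg.2 ⟨(1 / 4 : ℝ) • (a - b + w), ⟨?_, ?_⟩, by rw [hyx]; module⟩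
  · have := hK.sum_mem (t := Finset.univ) (w := ![11/40, 1/40, 9/40, 9/40, 10/40])
      (z := ![x, y, x + a, y - b, y + w]) (by simp [Fin.forall_fin_succ]; norm_num)
      (by simp [Fin.sum_univ_five]; norm_num) (by simp [Fin.forall_fin_succ, hx, hy, ha₁, hb₂, hw₁])
    convert this using 1
    simp [Fin.sum_univ_five, hyx]
    module
  · have := hK.sum_mem (t := Finset.univ) (w := ![3/32, 3/32, 9/32, 9/32, 8/32])
      (z := ![x, y, x - a, y + b, y - w]) (by simp [Fin.forall_fin_succ]; norm_num)
      (by simp [Fin.sum_univ_five]; norm_num) (by simp [Fin.forall_fin_succ, hx, hy, ha₂, hb₁, hw₂])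
    convert this using 1
    simp [Fin.sum_univ_five, hyx]
    module

theorem volume_ball_le_volume_Mreg (hlam : 0 < lam) :
    volume (ball x (lam * infDist x Kᶜ)) ≤ volume (Mreg K lam x) :=
  measure_mono (ball_subset_Mreg hlam ball_infDist_compl_subset)

theorem infDist_compl_le_of_mem_Mreg (hK : Convex ℝ K) (hlam : 0 ≤ lam) (hy : y ∈ Mreg K lam x) :
    infDist y Kᶜ ≤ (1 + lam) * infDist x Kᶜ := by
  obtain ⟨v, ⟨-, hv⟩, rfl⟩ := mem_Mreg.1 hy
  rw [show x + lam • v = (x - v) + (1 + lam) • (x - (x - v)) by module]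
  exact infDist_compl_homothety_le hK hv (by linarith) x

theorem Mreg_subset_sdiff_smul (hK : Convex ℝ K) {ρ t : ℝ} (hball : closedBall 0 ρ ⊆ K)
    (hne : Kᶜ.Nonempty) (hlam₀ : 0 ≤ lam) (hlam₁ : lam ≤ 1) (ht₀ : 0 ≤ t) (ht₁ : t < 1)
    (hx : (1 + lam) * infDist x Kᶜ < (1 - t) * ρ) : Mreg K lam x ⊆ K \ t • K := by
  refine fun y hy => ⟨Mreg_subset hK (abs_le.2 ⟨by linarith, hlam₁⟩) hy, fun hyt => ?_⟩
  have := le_infDist_compl_of_mem_smul hK hball hne ht₀ ht₁ hyt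
  linarith [infDist_compl_le_of_mem_Mreg hK hlam₀ hy]

theorem ncard_mul_le_of_pairwise_disjoint_Mreg (hK : Convex ℝ K) (hKc : IsCompact K) {ρ ε : ℝ}
    (hball : closedBall 0 ρ ⊆ K) (hε : 0 < ε) (hερ : 2 * ε ≤ ρ) {n : ℕ}
    {x : Fin n → EuclideanSpace ℝ (Fin d)} (hx : ∀ i, infDist (x i) Kᶜ = ε)
    (hdisj : Pairwise (Disjoint on fun i => Mreg K (1 / 20) (x i))) {c : ℝ} (hc : 0 ≤ c) :
    ({i | c ≤ (volume (Mreg K (1 / 5) (x i))).toReal}.ncard : ℝ) * c ≤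
      4 ^ d * (2 * d / ρ) * (volume K).toReal * ε := by
  classical
  have hρ : 0 < ρ := by linarith
  set t := 1 - 2 * ε / ρ
  have h1t : (1 - t) * ρ = 2 * ε := by rw [sub_sub_cancel, div_mul_cancel₀ _ hρ.ne']
  have ht₀ : 0 ≤ t := by rw [sub_nonneg, div_le_one hρ]; exact hερ
  have ht₁ : t < 1 := by simp only [t]; linarith [div_pos (mul_pos two_pos hε) hρ]
  have hshell i : Mreg K (1 / 20) (x i) ⊆ K \ t • K :=
    Mreg_subset_sdiff_smul hK hball (nonempty_of_infDist_pos ((hx i).symm ▸ hε)) (by norm_num)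
      (by norm_num) ht₀ ht₁ (by rw [hx i, h1t]; linarith)
  set F := {i | c ≤ (volume (Mreg K (1 / 5) (x i))).toReal}.toFinset
  have hvol : ∀ i ∈ F, ENNReal.ofReal (c / 4 ^ d) ≤ volume (Mreg K (1 / 20) (x i)) := by
    intro i hi
    rw [show (1 / 20 : ℝ) = 1 / 4 * (1 / 5) by norm_num, volume_Mreg_mul (by norm_num),
      div_eq_mul_inv, mul_comm, ENNReal.ofReal_mul (by positivity), ← inv_pow, one_div]
    gcongr
    exact ENNReal.ofReal_le_of_le_toReal (by simpa [F] using hi)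
  have key := (card_mul_le_measure_of_pairwiseDisjoint (s := F) (fun i _ j _ hij => hdisj hij)
    (fun i _ => (convex_Mreg hK).nullMeasurableSet (μ := volume)) (fun i _ => hshell i) hvol).trans
    (addHaar_sdiff_smul_le volume hK (hball (mem_closedBall_self hρ.le)) hKc.measure_lt_top.ne
      ht₀ ht₁.le)
  have hreal :=
    ENNReal.toReal_mono (ENNReal.mul_ne_top ENNReal.ofReal_ne_top hKc.measure_lt_top.ne) key
  rw [ENNReal.toReal_mul, ENNReal.toReal_mul, ENNReal.toReal_ofReal (by positivity),
    ENNReal.toReal_ofReal (by positivity), finrank_euclideanSpace_fin, ENNReal.toReal_natCast]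
    at hreal
  rw [ncard_eq_toFinset_card']
  calc (F.card : ℝ) * c = 4 ^ d * (F.card * (c / 4 ^ d)) := by field_simp
    _ ≤ 4 ^ d * (d * (1 - t) * (volume K).toReal) := by gcongr
    _ = 4 ^ d * (2 * d / ρ) * (volume K).toReal * ε := by rw [sub_sub_cancel]; ring

end Macbeath

theorem stmt16_general (d : ℕ) (γ c₁ c₂ : ℝ) (hγ0 : 0 < γ)
    (hc₁ : 0 < c₁) :
    ∃ C > (0 : ℝ), ∃ ε₀ > (0 : ℝ),
      ∀ (K : Set (EuclideanSpace ℝ (Fin d))),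
        Convex ℝ K → IsCompact K → (interior K).Nonempty →
        closedBall (0 : EuclideanSpace ℝ (Fin d)) (Real.sqrt γ) ⊆ K →
        K ⊆ closedBall (0 : EuclideanSpace ℝ (Fin d)) (1 / Real.sqrt γ) →
        ∀ (ε : ℝ), 0 < ε → ε ≤ ε₀ →
        ∃ (n : ℕ) (x : Fin n → EuclideanSpace ℝ (Fin d)),
          (∀ i, x i ∈ K ∧ infDist (x i) (frontier K) = ε) ∧
          (∀ v : ℝ, 0 < v →
            ({i : Fin n | c₁ * v ≤ (volume (Mreg K (1/5) (x i))).toReal ∧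
                (volume (Mreg K (1/5) (x i))).toReal ≤ c₂ * v}.ncard : ℝ) ≤ C * ε / v) ∧
          (∀ w : EuclideanSpace ℝ (Fin d), ‖w‖ = 1 →
            ∃ i, ∃ s : ℝ, 0 ≤ s ∧ s • w ∈ Mreg K (1/5) (x i)) := by
  set ρ := Real.sqrt γ
  have hρ : 0 < ρ := Real.sqrt_pos.2 hγ0
  set V := (volume (closedBall (0 : EuclideanSpace ℝ (Fin d)) (1 / ρ))).toReal
  refine ⟨4 ^ d * (2 * d / ρ) * V / c₁ + 1, by positivity, ρ / 2, by positivity, ?_⟩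
  intro K hK hKc _ hball hsub ε hε hερ
  obtain ⟨n, x, hxε, hdisj, hmax⟩ := exists_maximal_pairwise_disjoint {z | infDist z Kᶜ = ε}
    (U := Mreg K (1 / 20)) (measure_ball_pos volume (0 : EuclideanSpace ℝ (Fin d))
      (by positivity : 0 < 1 / 20 * ε)).ne' hKc.measure_lt_top.ne fun z hz =>
    ⟨(convex_Mreg hK).nullMeasurableSet (μ := volume), Mreg_subset hK (by norm_num),
      (Measure.addHaar_ball_center volume z _).symm.trans_le
        (hz ▸ volume_ball_le_volume_Mreg (by norm_num))⟩
  have hxK i : x i ∈ K := mem_of_infDist_compl_pos ((hxε i).symm ▸ hε)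
  refine ⟨n, x, fun i => ⟨hxK i, ?_⟩, fun v hv => ?_, fun w hw => ?_⟩
  · rw [infDist_frontier_eq_infDist_compl (hxK i)
      (nonempty_compl.1 (nonempty_of_infDist_pos ((hxε i).symm ▸ hε))), hxε i]
  · have hKV : (volume K).toReal ≤ V :=
      ENNReal.toReal_mono measure_closedBall_lt_top.ne (measure_mono hsub)
    have hcount := ncard_mul_le_of_pairwise_disjoint_Mreg hK hKc hball hε (by linarith) hxε hdisj
      (mul_pos hc₁ hv).le
    calc _ ≤ ({i | c₁ * v ≤ (volume (Mreg K (1 / 5) (x i))).toReal}.ncard : ℝ) := by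
          exact_mod_cast ncard_le_ncard fun i (hi : _ ∧ _) => hi.1
      _ ≤ 4 ^ d * (2 * d / ρ) * V / c₁ * ε / v := by
          rw [le_div_iff₀ hv, div_mul_eq_mul_div, le_div_iff₀ hc₁]
          nlinarith [mul_le_mul_of_nonneg_left hKV (by positivity : 0 ≤ 4 ^ d * (2 * d / ρ) * ε)]
      _ ≤ _ := by gcongr; linarith
  · obtain ⟨r, hr, hrε⟩ := exists_smul_infDist_compl_eq hK hKc.isBounded hball
      (norm_ne_zero_iff.1 (hw ▸ one_ne_zero)) hε (by linarith)
    have hrK := mem_of_infDist_compl_pos (hrε.symm ▸ hε)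
    obtain ⟨i, hi⟩ := hmax _ hrε
    exact ⟨i, r, hr, Mreg_subset_of_inter_nonempty hK (hxK i) hrK
      (not_disjoint_iff_nonempty_inter.1 hi) (self_mem_Mreg hrK)⟩

/-- For every constant `γ` (and constants `c₁ ≤ c₂` fixing the
meaning of "volume `Θ(v)`") there are constants `C > 0` and `ε₀ > 0` such that
for every convex body `K` in `γ`-canonical form and every `0 < ε ≤ ε₀` there
is a finite set of shrunken Macbeath regions `M'(x i)` with `δ(x i) = ε` such
that (i) for any `v > 0` the number of regions of volume in `[c₁v, c₂v]` is at
most `C·ε/v`, and (ii) every ray emanating from the origin meets some region. -/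
theorem stmt16 (d : ℕ) (γ c₁ c₂ : ℝ) (hγ0 : 0 < γ) (hγ1 : γ ≤ 1)
    (hc₁ : 0 < c₁) (hc₂ : c₁ ≤ c₂) :
    ∃ C > (0 : ℝ), ∃ ε₀ > (0 : ℝ),
      ∀ (K : Set (EuclideanSpace ℝ (Fin d))),
        Convex ℝ K → IsCompact K → (interior K).Nonempty →
        closedBall (0 : EuclideanSpace ℝ (Fin d)) (Real.sqrt γ) ⊆ K →
        K ⊆ closedBall (0 : EuclideanSpace ℝ (Fin d)) (1 / Real.sqrt γ) →
        ∀ (ε : ℝ), 0 < ε → ε ≤ ε₀ →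
        ∃ (n : ℕ) (x : Fin n → EuclideanSpace ℝ (Fin d)),
          (∀ i, x i ∈ K ∧ infDist (x i) (frontier K) = ε) ∧
          (∀ v : ℝ, 0 < v →
            ({i : Fin n | c₁ * v ≤ (volume (Mreg K (1/5) (x i))).toReal ∧
                (volume (Mreg K (1/5) (x i))).toReal ≤ c₂ * v}.ncard : ℝ) ≤ C * ε / v) ∧
          (∀ w : EuclideanSpace ℝ (Fin d), ‖w‖ = 1 →
            ∃ i, ∃ s : ℝ, 0 ≤ s ∧ s • w ∈ Mreg K (1/5) (x i)) :=
  stmt16_general d γ c₁ c₂ hγ0 hc₁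
end

section
/- Let K ⊂ R^d be a convex body in γ-canonical form and let C be a cap of K of volume V with ε^{(d+1)/2}·2^j ≤ V < ε^{(d+1)/2}·2^{j+1} (i.e., C is of type j), where C has width ε. Let a_j = max(j²,1) and C' = C^{1/a_j} (the cap with the same apex and base at distance ε/a_j from the supporting hyperplane). Then, letting k be the type of C', we have j + 1 > k > j − d·log₂(a_j) − 1, and consequently a_j = Θ(a_k), so C' has width ε/a_j = Θ(ε/a_k). -/
/-!
The homothety with centre at the apex `p` of a cap and ratio `1/a` maps the cap of width `t`
into the cap of width `t/a`, because it divides the distance to the supporting hyperplane by `a`.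
Hence `vol C^{1/a} ≤ vol C ≤ a^d vol C^{1/a}`, and since the type of a cap is, up to rounding,
the binary logarithm of its volume over `ε^{(d+1)/2}`, the type drops by less than
`d log₂ a + 1`.
-/

open MeasureTheory Metric
open scoped RealInnerProductSpace

/-- With `m` the support value of `K` in direction `u`, this is the cap of width `t`
when `‖u‖ = 1`. -/
def cap {E : Type*} [NormedAddCommGroup E] [InnerProductSpace ℝ E] (K : Set E) (u : E)
    (m t : ℝ) : Set E :=
  {y ∈ K | m - t ≤ ⟪u, y⟫}

def IsOfType (c V : ℝ) (j : ℤ) : Prop :=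
  c * 2 ^ j ≤ V ∧ V < c * 2 ^ (j + 1)

section Cap

variable {E : Type*} [NormedAddCommGroup E] [InnerProductSpace ℝ E]
  {K : Set E} {u p : E} {m t a : ℝ}

lemma cap_subset_self : cap K u m t ⊆ K := fun _ hy => hy.1

lemma cap_mono {s : ℝ} (h : s ≤ t) : cap K u m s ⊆ cap K u m t :=
  fun _ hy => ⟨hy.1, by linarith [hy.2]⟩

lemma homothety_image_cap_subset (hK : Convex ℝ K) (hp : p ∈ K) (hpm : m ≤ ⟪u, p⟫)
    (ha : 1 ≤ a) : AffineMap.homothety p a⁻¹ '' cap K u m t ⊆ cap K u m (t / a) := by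
  rintro _ ⟨y, ⟨hyK, hy⟩, rfl⟩
  have ha_pos : 0 < a⁻¹ := inv_pos.mpr (zero_lt_one.trans_le ha)
  have ha_le : a⁻¹ ≤ 1 := inv_le_one_of_one_le₀ ha
  refine ⟨?_, ?_⟩
  · rw [AffineMap.homothety_eq_lineMap]
    exact hK.lineMap_mem hp hyK ⟨ha_pos.le, ha_le⟩
  · rw [AffineMap.homothety_apply, vsub_eq_sub, vadd_eq_add, inner_add_right, inner_smul_right,
      inner_sub_right, div_eq_mul_inv]
    nlinarith [mul_nonneg (sub_nonneg.mpr ha_le) (sub_nonneg.mpr hpm)]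

variable [FiniteDimensional ℝ E] [MeasurableSpace E] [BorelSpace E]
  (μ : Measure E) [μ.IsAddHaarMeasure]

lemma measure_cap_le_pow_mul_measure_cap_div (hK : Convex ℝ K) (hp : p ∈ K)
    (hpm : m ≤ ⟪u, p⟫) (ha : 1 ≤ a) :
    μ (cap K u m t) ≤ ENNReal.ofReal (a ^ Module.finrank ℝ E) * μ (cap K u m (t / a)) := by
  have ha0 : 0 < a := zero_lt_one.trans_le ha
  calc μ (cap K u m t)
      = ENNReal.ofReal (a ^ Module.finrank ℝ E) * ENNReal.ofReal |a⁻¹ ^ Module.finrank ℝ E| *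
          μ (cap K u m t) := by
        rw [← ENNReal.ofReal_mul (by positivity), abs_of_pos (by positivity), ← mul_pow,
          mul_inv_cancel₀ ha0.ne', one_pow, ENNReal.ofReal_one, one_mul]
    _ = ENNReal.ofReal (a ^ Module.finrank ℝ E) *
          μ (AffineMap.homothety p a⁻¹ '' cap K u m t) := by
        rw [Measure.addHaar_image_homothety, mul_assoc]
    _ ≤ _ := by gcongr; exact homothety_image_cap_subset hK hp hpm ha

lemma toReal_measure_cap_le_pow_mul (hK : Convex ℝ K) (hKc : IsCompact K) (hp : p ∈ K)
    (hpm : m ≤ ⟪u, p⟫) (ha : 1 ≤ a) :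
    (μ (cap K u m t)).toReal ≤ a ^ Module.finrank ℝ E * (μ (cap K u m (t / a))).toReal := by
  have hfin : μ (cap K u m (t / a)) ≠ ⊤ :=
    ((measure_mono cap_subset_self).trans_lt hKc.measure_lt_top).ne
  calc (μ (cap K u m t)).toReal
      ≤ (ENNReal.ofReal (a ^ Module.finrank ℝ E) * μ (cap K u m (t / a))).toReal :=
        ENNReal.toReal_mono (ENNReal.mul_ne_top ENNReal.ofReal_ne_top hfin)
          (measure_cap_le_pow_mul_measure_cap_div μ hK hp hpm ha)
    _ = _ := by
        rw [ENNReal.toReal_mul, ENNReal.toReal_ofReal (pow_nonneg (zero_le_one.trans ha) _)]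

end Cap

namespace IsOfType

variable {c V W : ℝ} {j k : ℤ}

lemma lt_add_one (hc : 0 < c) (hj : IsOfType c V j) (hk : IsOfType c W k) (hWV : W ≤ V) :
    k < j + 1 := by
  have : c * 2 ^ k < c * 2 ^ (j + 1) := hk.1.trans_lt (hWV.trans_lt hj.2)
  exact (zpow_lt_zpow_iff_right₀ one_lt_two).mp (lt_of_mul_lt_mul_left this hc.le)

lemma sub_logb_sub_one_lt (hc : 0 < c) (hj : IsOfType c V j) (hk : IsOfType c W k) {b : ℝ}
    (hb : 0 < b) (hVW : V ≤ b * W) : (j : ℝ) - Real.logb 2 b - 1 < k := by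
  have h : c * 2 ^ j < c * (b * 2 ^ (k + 1)) := by
    calc c * 2 ^ j ≤ b * W := hj.1.trans hVW
      _ < b * (c * 2 ^ (k + 1)) := mul_lt_mul_of_pos_left hk.2 hb
      _ = c * (b * 2 ^ (k + 1)) := by ring
  have h2 : (2 : ℝ) ^ ((j - (k + 1) : ℤ) : ℝ) < b := by
    rw [Real.rpow_intCast, zpow_sub₀ two_ne_zero, div_lt_iff₀ (by positivity)]
    exact lt_of_mul_lt_mul_left h hc.le
  have := (Real.lt_logb_iff_rpow_lt one_lt_two hb).mpr h2
  push_cast at this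
  linarith

end IsOfType

theorem stmt19_general {d : ℕ}
    (K : Set (EuclideanSpace ℝ (Fin d)))
    (hKconv : Convex ℝ K) (hKcomp : IsCompact K) (hKint : (interior K).Nonempty)
    (ε : ℝ) (hε : 0 < ε)
    (u : EuclideanSpace ℝ (Fin d))
    (m : ℝ) (hm : m = sSup ((fun y => ⟪u, y⟫) '' K))
    (j k : ℤ) (a : ℝ) (ha : a = max ((j : ℝ) ^ 2) 1)
    -- C = the ε-width cap orthogonal to u has type j
    (htypej : ε ^ (((d : ℝ) + 1) / 2) * (2 : ℝ) ^ j ≤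
        (volume {y ∈ K | m - ε ≤ ⟪u, y⟫}).toReal ∧
      (volume {y ∈ K | m - ε ≤ ⟪u, y⟫}).toReal <
        ε ^ (((d : ℝ) + 1) / 2) * (2 : ℝ) ^ (j + 1))
    -- C' = C^{1/a_j}, cut at distance ε/a_j from the supporting hyperplane, has type k
    (htypek : ε ^ (((d : ℝ) + 1) / 2) * (2 : ℝ) ^ k ≤
        (volume {y ∈ K | m - ε / a ≤ ⟪u, y⟫}).toReal ∧
      (volume {y ∈ K | m - ε / a ≤ ⟪u, y⟫}).toReal <
        ε ^ (((d : ℝ) + 1) / 2) * (2 : ℝ) ^ (k + 1)) :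
    (j : ℝ) + 1 > (k : ℝ) ∧ (k : ℝ) > (j : ℝ) - d * Real.logb 2 a - 1 := by
  change IsOfType _ (volume (cap K u m ε)).toReal j at htypej
  change IsOfType _ (volume (cap K u m (ε / a))).toReal k at htypek
  have ha1 : 1 ≤ a := ha ▸ le_max_right _ _
  obtain ⟨p, hpK, hpm⟩ := hKcomp.exists_sSup_image_eq (hKint.mono interior_subset)
    (by fun_prop : Continuous fun y : EuclideanSpace ℝ (Fin d) => ⟪u, y⟫).continuousOn
  have hfin : volume (cap K u m ε) ≠ ⊤ :=
    (measure_mono cap_subset_self).trans_lt hKcomp.measure_lt_top |>.ne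
  have hle : (volume (cap K u m (ε / a))).toReal ≤ (volume (cap K u m ε)).toReal :=
    ENNReal.toReal_mono hfin (measure_mono (cap_mono (div_le_self hε.le ha1)))
  have hge : (volume (cap K u m ε)).toReal ≤ a ^ d * (volume (cap K u m (ε / a))).toReal := by
    simpa only [finrank_euclideanSpace_fin] using
      toReal_measure_cap_le_pow_mul volume hKconv hKcomp hpK (hm.trans hpm).le ha1
  have hc : 0 < ε ^ (((d : ℝ) + 1) / 2) := Real.rpow_pos_of_pos hε _
  refine ⟨by exact_mod_cast htypej.lt_add_one hc htypek hle, ?_⟩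
  have := htypej.sub_logb_sub_one_lt hc htypek (by positivity) hge
  rw [Real.logb_pow] at this
  linarith

/-- Let `K` be in `γ`-canonical form and `C` an `ε`-width cap of
`K` of type `j` (i.e. `ε^{(d+1)/2}·2^j ≤ vol(C) < ε^{(d+1)/2}·2^{j+1}`). With
`a_j = max(j², 1)`, let `C' = C^{1/a_j}` be the cap with the same apex whose
base is at distance `ε/a_j` from the supporting hyperplane, and let `k` be the
type of `C'`. Then `j + 1 > k > j − d·log₂(a_j) − 1`. -/
theorem stmt19 {d : ℕ} (γ : ℝ) (hγ0 : 0 < γ) (hγ1 : γ ≤ 1)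
    (K : Set (EuclideanSpace ℝ (Fin d)))
    (hKconv : Convex ℝ K) (hKcomp : IsCompact K) (hKint : (interior K).Nonempty)
    (hKcan₁ : closedBall (0 : EuclideanSpace ℝ (Fin d)) (Real.sqrt γ) ⊆ K)
    (hKcan₂ : K ⊆ closedBall (0 : EuclideanSpace ℝ (Fin d)) (1 / Real.sqrt γ))
    (ε : ℝ) (hε : 0 < ε) (hε1 : ε < 1)
    (u : EuclideanSpace ℝ (Fin d)) (hu : ‖u‖ = 1)
    (m : ℝ) (hm : m = sSup ((fun y => ⟪u, y⟫) '' K))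
    (j k : ℤ) (a : ℝ) (ha : a = max ((j : ℝ) ^ 2) 1)
    -- C = the ε-width cap orthogonal to u has type j
    (htypej : ε ^ (((d : ℝ) + 1) / 2) * (2 : ℝ) ^ j ≤
        (volume {y ∈ K | m - ε ≤ ⟪u, y⟫}).toReal ∧
      (volume {y ∈ K | m - ε ≤ ⟪u, y⟫}).toReal <
        ε ^ (((d : ℝ) + 1) / 2) * (2 : ℝ) ^ (j + 1))
    -- C' = C^{1/a_j}, cut at distance ε/a_j from the supporting hyperplane, has type k
    (htypek : ε ^ (((d : ℝ) + 1) / 2) * (2 : ℝ) ^ k ≤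
        (volume {y ∈ K | m - ε / a ≤ ⟪u, y⟫}).toReal ∧
      (volume {y ∈ K | m - ε / a ≤ ⟪u, y⟫}).toReal <
        ε ^ (((d : ℝ) + 1) / 2) * (2 : ℝ) ^ (k + 1)) :
    (j : ℝ) + 1 > (k : ℝ) ∧ (k : ℝ) > (j : ℝ) - d * Real.logb 2 a - 1 :=
  stmt19_general K hKconv hKcomp hKint ε hε u m hm j k a ha htypej htypek
end
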